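/- arXiv:math/0512389 — 4 statements merged into one kernel-verified Lean document; each statement's English description precedes it below -/
import Mathlib

section
/- Let n, k, l be integers with 0 ≤ k and k + l ≤ n. Then the map ψ_n^l : A_{n,k} → A_{n,k+l} is S_n-equivariant: ψ_n^l(σ·f) = σ·ψ_n^l(f) for all σ ∈ S_n and f ∈ A_{n,k}. Moreover, if k ≤ m ≤ n − k, then the restriction of ψ_n^{m−k} to A⁰_{n,k} is injective; hence ψ_n^{m−k} is an isomorphism of representations of S_n from A⁰_{n,k} onto H^k_{n,m}. -/
/-!
`ψ^l` sends `x_J` to the sum of the `x_T` over `T ⊇ J` with `|T| = |J| + l`, so the coefficient of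
`x_T` in `ψ^l f` is `F(T) = ∑_{I ⊆ T, |I| = k} c_I`; equivariance is a relabelling of the sets `S`.

For injectivity on `A⁰_{n,k}`, let `ψ^l f = 0`, so that `F` vanishes on `(k+l)`-sets, and descend
in `t = |T|`. Summing `F(T ∪ {j})` over the `n - t` indices `j ∉ T` counts `F(T)` once for each `j`,
plus the terms `c_{J ∪ {j}}` with `J ⊆ T`, `|J| = k - 1`; the harmonic relation
`∑_{j ∉ J} c_{J ∪ {j}} = 0` turns the latter into `-∑_{j ∈ T \ J} c_{J ∪ {j}}`, which adds up to
`-k F(T)`. Hence `(n - t - k) F(T) = 0`, and `n - t - k > 0` while `t < k + l ≤ n - k`.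
At `t = k` this gives `c_I = F(I) = 0`.
-/

open MvPolynomial Finset

noncomputable section

/-- The "square-free monomial" `x_I = ∏_{i ∈ I} x_i`. -/
def xI (n : ℕ) (I : Finset (Fin n)) : MvPolynomial (Fin n) ℂ := ∏ i ∈ I, X i

/-- `A_{n,k}`: the span of the square-free monomials of degree `k`. -/
def Aspace (n k : ℕ) : Submodule ℂ (MvPolynomial (Fin n) ℂ) :=
  Submodule.span ℂ {f | ∃ I : Finset (Fin n), I.card = k ∧ f = xI n I}

/-- The coefficient `c_I` of the monomial `x_I` in `f`. -/
def coeffI {n : ℕ} (f : MvPolynomial (Fin n) ℂ) (I : Finset (Fin n)) : ℂ :=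
  MvPolynomial.coeff (∑ i ∈ I, Finsupp.single i 1) f

/-- `A⁰_{n,k}`: elements `∑ c_I x_I` of `A_{n,k}` with `∑_{j ∉ J} c_{J ∪ {j}} = 0`
for every `(k-1)`-element subset `J`. -/
def A0space (n k : ℕ) : Submodule ℂ (MvPolynomial (Fin n) ℂ) where
  carrier := {f | f ∈ Aspace n k ∧ ∀ J : Finset (Fin n), J.card = k - 1 →
    ∑ j ∈ Jᶜ, coeffI f (insert j J) = 0}
  add_mem' := by
    rintro f g ⟨hf1, hf2⟩ ⟨hg1, hg2⟩
    refine ⟨Submodule.add_mem _ hf1 hg1, fun J hJ => ?_⟩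
    have h1 := hf2 J hJ
    have h2 := hg2 J hJ
    simp only [coeffI] at h1 h2 ⊢
    simp only [coeff_add]
    rw [Finset.sum_add_distrib, h1, h2, add_zero]
  zero_mem' := by
    refine ⟨Submodule.zero_mem _, fun J hJ => ?_⟩
    simp [coeffI]
  smul_mem' := by
    rintro c f ⟨hf1, hf2⟩
    refine ⟨Submodule.smul_mem _ c hf1, fun J hJ => ?_⟩
    have h1 := hf2 J hJ
    simp only [coeffI] at h1 ⊢
    simp only [coeff_smul, smul_eq_mul]
    rw [← Finset.mul_sum, h1, mul_zero]

/-- `ψ_n^l`, the linear map sending the square-free monomial `x_I` to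
`x_I · ∑_S x_S`, the sum over all `l`-element subsets `S` of `{1,…,n} \ I`. -/
def psi (n l : ℕ) : MvPolynomial (Fin n) ℂ →ₗ[ℂ] MvPolynomial (Fin n) ℂ :=
  ∑ S ∈ Finset.univ.filter (fun S : Finset (Fin n) => S.card = l),
    (LinearMap.mulRight ℂ (xI n S)).comp
      (aeval (fun i : Fin n => if i ∈ S then 0 else X i) :
        MvPolynomial (Fin n) ℂ →ₐ[ℂ] MvPolynomial (Fin n) ℂ).toLinearMap

/-- `H^k_{n,m} = ψ_n^{m-k}(A⁰_{n,k})`. -/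
def Hspace (n m k : ℕ) : Submodule ℂ (MvPolynomial (Fin n) ℂ) :=
  (A0space n k).map (psi n (m - k))

/-- The squared norm of a form: the monomials `x_I` are an orthonormal basis. -/
def sqNorm {n : ℕ} (f : MvPolynomial (Fin n) ℂ) : ℝ :=
  ∑ d ∈ f.support, Complex.normSq (f.coeff d)

/-- The inner product of two forms: the monomials `x_I` are an orthonormal basis. -/
def pInner {n : ℕ} (f g : MvPolynomial (Fin n) ℂ) : ℂ :=
  ∑ d ∈ f.support, f.coeff d * (starRingEnd ℂ) (g.coeff d)

namespace Finset

variable {α M : Type*} [DecidableEq α]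

theorem sum_powersetCard_succ_insert [AddCommMonoid M] {a : α} {s : Finset α} (ha : a ∉ s)
    (k : ℕ) (f : Finset α → M) :
    ∑ t ∈ (insert a s).powersetCard (k + 1), f t =
      ∑ t ∈ s.powersetCard (k + 1), f t + ∑ t ∈ s.powersetCard k, f (insert a t) := by
  rw [powersetCard_succ_insert ha, sum_union, sum_image]
  · exact insert_erase_invOn.2.injOn.mono fun t ht ↦ notMem_mono (mem_powersetCard.1 ht).1 ha
  · aesop (add simp [disjoint_left, insert_subset_iff, mem_powersetCard])

theorem sum_powersetCard_sum_sdiff_insert [AddCommMonoid M] (k : ℕ) (s : Finset α)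
    (f : Finset α → M) :
    ∑ t ∈ s.powersetCard k, ∑ a ∈ s \ t, f (insert a t) =
      (k + 1) • ∑ t ∈ s.powersetCard (k + 1), f t := by
  have hcard : ∀ t ∈ s.powersetCard (k + 1), (k + 1) • f t = ∑ _a ∈ t, f t := fun t ht ↦ by
    rw [sum_const, (mem_powersetCard.1 ht).2]
  rw [smul_sum, sum_congr rfl hcard, sum_sigma', sum_sigma']
  refine sum_nbij' (fun x ↦ ⟨insert x.2 x.1, x.2⟩) (fun y ↦ ⟨y.1.erase y.2, y.2⟩) ?_ ?_ ?_ ?_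
    fun _ _ ↦ rfl
  · rintro ⟨t, a⟩ h
    simp only [mem_sigma, mem_powersetCard, mem_sdiff] at h ⊢
    exact ⟨⟨insert_subset h.2.1 h.1.1, by rw [card_insert_of_notMem h.2.2, h.1.2]⟩,
      mem_insert_self _ _⟩
  · rintro ⟨t, a⟩ h
    simp only [mem_sigma, mem_powersetCard, mem_sdiff] at h ⊢
    exact ⟨⟨(erase_subset _ _).trans h.1.1, by rw [card_erase_of_mem h.2, h.1.2]; rfl⟩,
      h.1.1 h.2, notMem_erase _ _⟩
  · rintro ⟨t, a⟩ h
    simp only [mem_sigma, mem_sdiff] at h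
    simp [erase_insert h.2.2]
  · rintro ⟨t, a⟩ h
    simp only [mem_sigma] at h
    simp [insert_erase h.2]

end Finset

section Harmonic

variable {α M : Type*} [Fintype α] [DecidableEq α] [AddCommGroup M] [IsAddTorsionFree M]

theorem sum_powersetCard_eq_zero_of_forall_insert {k : ℕ} {c : Finset α → M}
    (hc : ∀ J : Finset α, #J + 1 = k → ∑ j ∈ Jᶜ, c (insert j J) = 0)
    {T : Finset α} (hT : #T + k < Fintype.card α)
    (hins : ∀ j ∉ T, ∑ I ∈ (insert j T).powersetCard k, c I = 0) :
    ∑ I ∈ T.powersetCard k, c I = 0 := by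
  cases k with
  | zero =>
    obtain ⟨j, -, hj⟩ := exists_mem_notMem_of_card_lt_card (s := T) (t := univ)
      (by simpa using hT)
    simpa using hins j hj
  | succ k =>
    set F := ∑ I ∈ T.powersetCard (k + 1), c I
    have hsplit : ∀ J ∈ T.powersetCard k,
        ∑ j ∈ Tᶜ, c (insert j J) = -∑ j ∈ T \ J, c (insert j J) := fun J hJ ↦ by
      rw [eq_neg_iff_add_eq_zero, ← hc J (by rw [(mem_powersetCard.1 hJ).2]), add_comm,
        ← compl_sdiff_compl, sum_sdiff (compl_subset_compl.2 (mem_powersetCard.1 hJ).1)]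
    have hcount : #Tᶜ • F = (k + 1) • F := by
      have := sum_eq_zero fun j hj ↦ hins j (mem_compl.1 hj)
      rwa [sum_congr rfl fun j hj ↦ sum_powersetCard_succ_insert (mem_compl.1 hj) k c,
        sum_add_distrib, sum_const, sum_comm, sum_congr rfl hsplit, sum_neg_distrib,
        sum_powersetCard_sum_sdiff_insert, ← sub_eq_add_neg, sub_eq_zero] at this
    have hlt : k + 1 < #Tᶜ := by rw [card_compl]; omega
    rw [← Nat.sub_add_cancel hlt.le, add_nsmul, add_eq_right,
      nsmul_eq_zero_iff_right (by omega)] at hcount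
    exact hcount

theorem eq_zero_of_forall_sum_powersetCard_eq_zero {k l : ℕ}
    (hn : 2 * k + l ≤ Fintype.card α) {c : Finset α → M}
    (hc : ∀ J : Finset α, #J + 1 = k → ∑ j ∈ Jᶜ, c (insert j J) = 0)
    (htop : ∀ T : Finset α, #T = k + l → ∑ I ∈ T.powersetCard k, c I = 0)
    {I : Finset α} (hI : #I = k) : c I = 0 := by
  have hdescend : ∀ i, ∀ T : Finset α, #T + i = k + l → ∑ I ∈ T.powersetCard k, c I = 0 := by
    intro i
    induction i with
    | zero => exact htop
    | succ i ih =>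
      intro T hT
      refine sum_powersetCard_eq_zero_of_forall_insert hc (by omega) fun j hj ↦ ih _ ?_
      rw [card_insert_of_notMem hj]
      omega
  simpa [← hI, powersetCard_self] using hdescend l I (by omega)

end Harmonic

theorem sum_single_one_apply {σ : Type*} [DecidableEq σ] (I : Finset σ) (j : σ) :
    (∑ i ∈ I, Finsupp.single i 1 : σ →₀ ℕ) j = if j ∈ I then 1 else 0 := by
  simp [Finset.sum_apply', Finsupp.single_apply]

theorem sum_single_one_injective {σ : Type*} :
    Function.Injective fun I : Finset σ ↦ (∑ i ∈ I, Finsupp.single i 1 : σ →₀ ℕ) := by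
  classical
  intro I J h
  ext j
  have hj := DFunLike.congr_fun h j
  simp only [sum_single_one_apply] at hj
  split_ifs at hj <;> simp_all

section Forms

variable {n : ℕ}

theorem xI_eq_monomial (I : Finset (Fin n)) :
    xI n I = monomial (∑ i ∈ I, Finsupp.single i 1) 1 := by
  rw [monomial_sum_one]
  rfl

theorem coeffI_xI (I J : Finset (Fin n)) :
    coeffI (xI n J) I = if I = J then 1 else 0 := by
  rw [coeffI, xI_eq_monomial, coeff_monomial]
  simp only [sum_single_one_injective.eq_iff, eq_comm]

theorem psi_apply (l : ℕ) (f : MvPolynomial (Fin n) ℂ) :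
    psi n l f = ∑ S ∈ univ.filter (fun S : Finset (Fin n) ↦ S.card = l),
      aeval (fun i ↦ if i ∈ S then 0 else X i) f * xI n S := by
  simp [psi]

theorem aeval_xI (I S : Finset (Fin n)) :
    aeval (fun i ↦ if i ∈ S then 0 else X i) (xI n I) = if Disjoint I S then xI n I else 0 := by
  simp_rw [xI, map_prod, aeval_X, ← ite_not (_ ∈ S), prod_ite_zero, disjoint_left]
  congr

theorem psi_xI (l : ℕ) (I : Finset (Fin n)) :
    psi n l (xI n I) = ∑ S ∈ Iᶜ.powersetCard l, xI n (I ∪ S) := by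
  simp_rw [psi_apply, aeval_xI, ite_mul, zero_mul, ← sum_filter, filter_filter]
  refine sum_congr ?_ fun S hS ↦
    (prod_union (subset_compl_iff_disjoint_left.1 (mem_powersetCard.1 hS).1)).symm
  ext S
  simp [mem_powersetCard, subset_compl_iff_disjoint_left, and_comm]

def lcoeffI (I : Finset (Fin n)) : MvPolynomial (Fin n) ℂ →ₗ[ℂ] ℂ :=
  lcoeff ℂ (∑ i ∈ I, Finsupp.single i 1)

@[simp]
theorem lcoeffI_apply (I : Finset (Fin n)) (f : MvPolynomial (Fin n) ℂ) :
    lcoeffI I f = coeffI f I :=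
  rfl

theorem map_psi_Aspace_le (k l : ℕ) : (Aspace n k).map (psi n l) ≤ Aspace n (k + l) := by
  refine (Submodule.map_span_le _ _ _).2 ?_
  rintro _ ⟨J, rfl, rfl⟩
  rw [psi_xI]
  refine Submodule.sum_mem _ fun S hS ↦ Submodule.subset_span ⟨J ∪ S, ?_, rfl⟩
  obtain ⟨hSJ, rfl⟩ := mem_powersetCard.1 hS
  exact card_union_of_disjoint (subset_compl_iff_disjoint_left.1 hSJ)

theorem sum_coeffI_smul_xI {k : ℕ} {f : MvPolynomial (Fin n) ℂ} (hf : f ∈ Aspace n k) :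
    ∑ I ∈ univ.powersetCard k, coeffI f I • xI n I = f := by
  let expand : MvPolynomial (Fin n) ℂ →ₗ[ℂ] MvPolynomial (Fin n) ℂ :=
    ∑ I ∈ univ.powersetCard k, (lcoeffI I).smulRight (xI n I)
  have : Set.EqOn expand (LinearMap.id : MvPolynomial (Fin n) ℂ →ₗ[ℂ] _)
      (Aspace n k : Set (MvPolynomial (Fin n) ℂ)) := by
    refine LinearMap.eqOn_span' ?_
    rintro _ ⟨J, hJ, rfl⟩
    simp [expand, coeffI_xI, hJ]
  simpa [expand] using this hf

theorem coeffI_psi_xI (l : ℕ) {J T : Finset (Fin n)} (hT : #T = #J + l) :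
    coeffI (psi n l (xI n J)) T = if J ⊆ T then 1 else 0 := by
  rw [psi_xI, ← lcoeffI_apply, map_sum]
  simp_rw [lcoeffI_apply, coeffI_xI]
  split_ifs with hJT
  · have hmem : T \ J ∈ Jᶜ.powersetCard l := by
      refine mem_powersetCard.2 ⟨fun x hx ↦ mem_compl.2 (mem_sdiff.1 hx).2, ?_⟩
      rw [card_sdiff_of_subset hJT]
      omega
    rw [sum_eq_single_of_mem (T \ J) hmem, if_pos (union_sdiff_of_subset hJT).symm]
    rintro S hS hne
    refine if_neg fun hTJS ↦ hne ?_
    rw [hTJS,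
      union_sdiff_cancel_left (subset_compl_iff_disjoint_left.1 (mem_powersetCard.1 hS).1)]
  · exact sum_eq_zero fun S _ ↦ if_neg fun (hTJS : T = J ∪ S) ↦ hJT (hTJS ▸ subset_union_left)

theorem coeffI_psi {k l : ℕ} {f : MvPolynomial (Fin n) ℂ} (hf : f ∈ Aspace n k)
    {T : Finset (Fin n)} (hT : #T = k + l) :
    coeffI (psi n l f) T = ∑ I ∈ T.powersetCard k, coeffI f I := by
  have : Set.EqOn ((lcoeffI T).comp (psi n l))
      (∑ I ∈ T.powersetCard k, lcoeffI I : MvPolynomial (Fin n) ℂ →ₗ[ℂ] ℂ)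
      (Aspace n k : Set (MvPolynomial (Fin n) ℂ)) := by
    refine LinearMap.eqOn_span' ?_
    rintro _ ⟨J, rfl, rfl⟩
    simp [coeffI_psi_xI l hT, coeffI_xI, mem_powersetCard]
  simpa using this hf

theorem rename_xI (σ : Equiv.Perm (Fin n)) (S : Finset (Fin n)) :
    rename σ (xI n S) = xI n (S.map σ.toEmbedding) := by
  simp [xI, prod_map]

theorem psi_rename (l : ℕ) (σ : Equiv.Perm (Fin n)) (f : MvPolynomial (Fin n) ℂ) :
    psi n l (rename σ f) = rename σ (psi n l f) := by
  rw [psi_apply, psi_apply, map_sum]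
  refine (sum_equiv σ.finsetCongr (by simp) fun S _ ↦ ?_).symm
  rw [map_mul, rename_xI, comp_aeval_apply, aeval_rename]
  congr 2
  ext i : 1
  by_cases hi : i ∈ S <;> simp [hi]

theorem disjoint_A0space_ker_psi {k l : ℕ} (h : 2 * k + l ≤ n) :
    Disjoint (A0space n k) (LinearMap.ker (psi n l)) := by
  rw [LinearMap.disjoint_ker]
  rintro f ⟨hfA, hharm⟩ hf0
  have hcoeff : ∀ I : Finset (Fin n), #I = k → coeffI f I = 0 := fun I hI ↦
    eq_zero_of_forall_sum_powersetCard_eq_zero (by simpa using h)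
      (fun J hJ ↦ hharm J (by omega))
      (fun T hT ↦ by rw [← coeffI_psi hfA hT, hf0, coeffI, coeff_zero]) hI
  rw [← sum_coeffI_smul_xI hfA]
  exact sum_eq_zero fun I hI ↦ by rw [hcoeff I (mem_powersetCard_univ.1 hI), zero_smul]

end Forms

theorem psi_equivariant_and_injective_general (n k l : ℕ) :
    (∀ f ∈ Aspace n k, psi n l f ∈ Aspace n (k + l)) ∧
    (∀ (σ : Equiv.Perm (Fin n)), ∀ f ∈ Aspace n k,
      psi n l (rename σ f) = rename σ (psi n l f)) ∧
    (∀ m : ℕ, k ≤ m → k + m ≤ n →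
      (∀ f ∈ A0space n k, ∀ g ∈ A0space n k,
        psi n (m - k) f = psi n (m - k) g → f = g) ∧
      (A0space n k).map (psi n (m - k)) = Hspace n m k) := by
  refine ⟨fun f hf ↦ map_psi_Aspace_le k l (Submodule.mem_map_of_mem hf),
    fun σ f _ ↦ psi_rename l σ f, fun m hkm hkmn ↦ ⟨fun f hf g hg ↦ ?_, rfl⟩⟩
  exact LinearMap.disjoint_ker_iff_injOn.1 (disjoint_A0space_ker_psi (by omega)) hf hg

/-- For `0 ≤ k` and `k + l ≤ n`, the map `ψ_n^l : A_{n,k} → A_{n,k+l}` is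
`S_n`-equivariant; moreover, for `k ≤ m ≤ n - k`, the restriction of `ψ_n^{m-k}`
to `A⁰_{n,k}` is injective, hence `ψ_n^{m-k}` is an isomorphism of representations
of `S_n` from `A⁰_{n,k}` onto `H^k_{n,m}`. -/
theorem psi_equivariant_and_injective (n k l : ℕ) (hkl : k + l ≤ n) :
    (∀ f ∈ Aspace n k, psi n l f ∈ Aspace n (k + l)) ∧
    (∀ (σ : Equiv.Perm (Fin n)), ∀ f ∈ Aspace n k,
      psi n l (rename σ f) = rename σ (psi n l f)) ∧
    (∀ m : ℕ, k ≤ m → k + m ≤ n →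
      (∀ f ∈ A0space n k, ∀ g ∈ A0space n k,
        psi n (m - k) f = psi n (m - k) g → f = g) ∧
      (A0space n k).map (psi n (m - k)) = Hspace n m k) :=
  psi_equivariant_and_injective_general n k l

end
end

section
/- Let n, k, m be integers with 0 ≤ k < m and 2m ≤ n, let f₀ ∈ A⁰_{n,k}, and set f = ψ_n^{m−k}(f₀) ∈ A_{n,m} ⊆ A_{n+1,m}. Define g₁ = ((n−m−k+1)/(n−2k+1)) · ( f + x_{n+1}·ψ_n^{m−k−1}(f₀) ) and g₂ = (1/(n−2k+1)) · ( (m−k)·f − (n−m−k+1)·x_{n+1}·ψ_n^{m−k−1}(f₀) ), both elements of A_{n+1,m}. Then f = g₁ + g₂, g₁ ∈ H^k_{n+1,m} = ψ_{n+1}^{m−k}(A⁰_{n+1,k}), and g₂ ∈ H^{k+1}_{n+1,m} = ψ_{n+1}^{m−k−1}(A⁰_{n+1,k+1}). -/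
open MvPolynomial Finset

noncomputable section

/-- The embedding `A_{n,m} ⊆ A_{n+1,m}` via `Fin.castSucc`. -/
def emb (n : ℕ) : MvPolynomial (Fin n) ℂ →ₐ[ℂ] MvPolynomial (Fin (n + 1)) ℂ :=
  rename Fin.castSucc

-- chunk 1: basic lemmas
namespace Scratch

/-- degree finsupp of a squarefree monomial -/
def dI {n : ℕ} (I : Finset (Fin n)) : Fin n →₀ ℕ := ∑ i ∈ I, Finsupp.single i 1

lemma dI_apply {n : ℕ} (I : Finset (Fin n)) (j : Fin n) :
    dI I j = if j ∈ I then 1 else 0 := by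
  classical
  simp only [dI, Finsupp.finset_sum_apply, Finsupp.single_apply]
  split_ifs with h
  · rw [Finset.sum_eq_single j (fun b _ hb => by simp [hb]) (by simp [h])]
    simp
  · exact Finset.sum_eq_zero fun b hb => by
      simp [show ¬ b = j from fun e => h (e ▸ hb)]

lemma coeffI_def {n : ℕ} (f : MvPolynomial (Fin n) ℂ) (I : Finset (Fin n)) :
    coeffI f I = MvPolynomial.coeff (dI I) f := rfl

/-- the substitution map zeroing variables in S -/
def sub {n : ℕ} (S : Finset (Fin n)) : MvPolynomial (Fin n) ℂ →ₐ[ℂ] MvPolynomial (Fin n) ℂ :=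
  aeval (fun i : Fin n => if i ∈ S then 0 else X i)

lemma psi_apply (n l : ℕ) (f : MvPolynomial (Fin n) ℂ) :
    psi n l f = ∑ S ∈ Finset.univ.filter (fun S : Finset (Fin n) => S.card = l),
      sub S f * xI n S := by
  simp [psi, sub, LinearMap.sum_apply, LinearMap.mulRight_apply]

lemma psi_zero (n : ℕ) (f : MvPolynomial (Fin n) ℂ) : psi n 0 f = f := by
  rw [psi_apply]
  rw [Finset.sum_eq_single (∅ : Finset (Fin n))]
  · simp only [sub, xI, Finset.prod_empty, mul_one, Finset.notMem_empty, if_false]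
    exact aeval_X_left_apply f
  · intro b hb hne
    simp only [Finset.mem_filter, Finset.card_eq_zero] at hb
    exact absurd hb.2 hne
  · simp
end Scratch
namespace Scratch

lemma coeff_sub {n : ℕ} (S : Finset (Fin n)) (p : MvPolynomial (Fin n) ℂ) :
    ∀ d : Fin n →₀ ℕ, MvPolynomial.coeff d (sub S p) =
      if ∀ s ∈ S, d s = 0 then MvPolynomial.coeff d p else 0 := by
  classical
  induction p using MvPolynomial.induction_on with
  | C a =>
    intro d
    rw [show (sub S (C a) : MvPolynomial (Fin n) ℂ) = C a by simp [sub]]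
    rw [MvPolynomial.coeff_C]
    split_ifs with h1 h2 h2
    · rfl
    · exact absurd (fun s _ => by rw [← h1]; rfl) h2
    · rfl
    · rfl
  | add p q hp hq =>
    intro d
    simp only [map_add, MvPolynomial.coeff_add, hp d, hq d]
    split_ifs <;> simp
  | mul_X p t hp =>
    intro d
    by_cases ht : t ∈ S
    · have hsub : sub S (p * X t) = 0 := by simp [sub, ht]
      rw [hsub, MvPolynomial.coeff_zero]
      split_ifs with h
      · rw [MvPolynomial.coeff_mul_X', if_neg]
        simp [Finsupp.mem_support_iff, h t ht]
      · rfl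
    · have hsub : sub S (p * X t) = sub S p * X t := by simp [sub, ht]
      rw [hsub, MvPolynomial.coeff_mul_X', MvPolynomial.coeff_mul_X', hp]
      by_cases hmem : t ∈ d.support
      · rw [if_pos hmem, if_pos hmem]
        by_cases h : ∀ s ∈ S, d s = 0
        · have h' : ∀ s ∈ S, ((d - Finsupp.single t 1 : Fin n →₀ ℕ)) s = 0 := by
            intro s hs
            have hts : ¬ t = s := fun e => ht (e ▸ hs)
            simp [Finsupp.single_apply, h s hs, hts]
          rw [if_pos h, if_pos h']
        · have h' : ¬ ∀ s ∈ S, ((d - Finsupp.single t 1 : Fin n →₀ ℕ)) s = 0 := by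
            intro hall
            apply h
            intro s hs
            have hts : ¬ t = s := fun e => ht (e ▸ hs)
            have := hall s hs
            simpa [Finsupp.single_apply, hts] using this
          rw [if_neg h, if_neg h']
      · rw [if_neg hmem, if_neg hmem]
        split_ifs <;> rfl

lemma sub_sub {n : ℕ} (S T : Finset (Fin n)) (p : MvPolynomial (Fin n) ℂ) :
    sub T (sub S p) = sub (S ∪ T) p := by
  show (sub T).comp (sub S) p = _
  have : (sub T).comp (sub S) = sub (S ∪ T) := by
    simp only [sub]
    rw [comp_aeval]
    congr 1
    funext i
    by_cases hiS : i ∈ S <;> by_cases hiT : i ∈ T <;>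
      simp [hiS, hiT, Finset.mem_union]
  rw [this]

end Scratch
namespace Scratch

lemma dI_map {n : ℕ} (I : Finset (Fin n)) :
    dI (I.map Fin.castSuccEmb) = Finsupp.mapDomain Fin.castSucc (dI I) := by
  rw [dI, dI, Finset.sum_map, Finsupp.mapDomain_finset_sum]
  refine Finset.sum_congr rfl fun i _ => ?_
  rw [Finsupp.mapDomain_single]
  rfl

lemma coeffI_emb {n : ℕ} (p : MvPolynomial (Fin n) ℂ) (I : Finset (Fin n)) :
    coeffI (emb n p) (I.map Fin.castSuccEmb) = coeffI p I := by
  rw [coeffI_def, coeffI_def, dI_map, emb]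
  exact coeff_rename_mapDomain _ (Fin.castSucc_injective n) p (dI I)

lemma coeffI_emb_zero {n : ℕ} (p : MvPolynomial (Fin n) ℂ) (I : Finset (Fin (n+1)))
    (h : Fin.last n ∈ I) : coeffI (emb n p) I = 0 := by
  by_contra hne
  obtain ⟨u, hu, -⟩ := coeff_rename_ne_zero _ _ _ hne
  have h1 : Finsupp.mapDomain Fin.castSucc u (Fin.last n) = 0 := by
    rw [Finsupp.mapDomain_notin_range]
    rintro ⟨i, hi⟩
    exact absurd hi (Fin.castSucc_lt_last i).ne
  rw [hu] at h1
  have h2 : dI I (Fin.last n) = 0 := h1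
  rw [dI_apply, if_pos h] at h2
  exact one_ne_zero h2

lemma dI_insert {n : ℕ} (I : Finset (Fin n)) (s : Fin n) (hs : s ∉ I) :
    dI (insert s I) = Finsupp.single s 1 + dI I := by
  rw [dI, Finset.sum_insert hs]
  rfl

lemma coeffI_Xlast_mul {n : ℕ} (q : MvPolynomial (Fin (n+1)) ℂ) (I : Finset (Fin (n+1)))
    (h : Fin.last n ∈ I) :
    coeffI (X (Fin.last n) * q) I = coeffI q (I.erase (Fin.last n)) := by
  rw [coeffI_def, coeffI_def]
  have : dI I = Finsupp.single (Fin.last n) 1 + dI (I.erase (Fin.last n)) := by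
    rw [← dI_insert _ _ (Finset.notMem_erase _ _), Finset.insert_erase h]
  rw [this, MvPolynomial.coeff_X_mul]

lemma coeffI_Xlast_mul_zero {n : ℕ} (q : MvPolynomial (Fin (n+1)) ℂ) (I : Finset (Fin (n+1)))
    (h : Fin.last n ∉ I) :
    coeffI (X (Fin.last n) * q) I = 0 := by
  rw [coeffI_def, MvPolynomial.coeff_X_mul', if_neg]
  rw [Finsupp.mem_support_iff, dI_apply, if_neg h]
  simp

end Scratch
namespace Scratch

lemma singleton_sum {n : ℕ} {M : Type*} [AddCommMonoid M] (F : Finset (Fin n) → M) :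
    ∑ S ∈ Finset.univ.filter (fun S : Finset (Fin n) => S.card = 1), F S
      = ∑ s : Fin n, F {s} := by
  refine (Finset.sum_bij (fun (s : Fin n) (_ : s ∈ Finset.univ) => ({s} : Finset (Fin n)))
    ?_ ?_ ?_ ?_).symm
  · intro s _
    simp
  · intro a _ b _ h
    exact Finset.singleton_injective h
  · intro S hS
    simp only [Finset.mem_filter, Finset.card_eq_one] at hS
    obtain ⟨a, rfl⟩ := hS.2
    exact ⟨a, Finset.mem_univ a, rfl⟩
  · intro s _
    rfl

lemma dI_sub_single {n : ℕ} (I : Finset (Fin n)) (s : Fin n) (hs : s ∈ I) :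
    dI I - Finsupp.single s 1 = dI (I.erase s) := by
  have h0 : dI I = Finsupp.single s 1 + dI (I.erase s) := by
    rw [← dI_insert _ _ (Finset.notMem_erase s I), Finset.insert_erase hs]
  rw [h0, add_tsub_cancel_left]

lemma coeffI_psi_one {n : ℕ} (p : MvPolynomial (Fin n) ℂ) (I : Finset (Fin n)) :
    coeffI (psi n 1 p) I = ∑ s ∈ I, coeffI p (I.erase s) := by
  rw [coeffI_def, psi_apply, MvPolynomial.coeff_sum,
    singleton_sum (fun S => MvPolynomial.coeff (dI I) (sub S p * xI n S))]
  have key : ∀ s : Fin n, MvPolynomial.coeff (dI I) (sub {s} p * xI n {s}) =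
      if s ∈ I then coeffI p (I.erase s) else 0 := by
    intro s
    rw [show xI n {s} = X s by rw [xI, Finset.prod_singleton]]
    rw [MvPolynomial.coeff_mul_X']
    by_cases hsI : s ∈ I
    · rw [if_pos, if_pos hsI, dI_sub_single I s hsI, coeff_sub, if_pos]
      · rfl
      · intro t ht
        rw [Finset.mem_singleton] at ht
        subst ht
        rw [dI_apply, if_neg (Finset.notMem_erase t I)]
      · rw [Finsupp.mem_support_iff, dI_apply, if_pos hsI]
        simp
    · rw [if_neg hsI, if_neg]
      rw [Finsupp.mem_support_iff, dI_apply, if_neg hsI]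
      simp
  rw [Finset.sum_congr rfl (fun s _ => key s)]
  rw [Finset.sum_ite_mem, Finset.univ_inter]

end Scratch
namespace Scratch

lemma last_not_mem_map {n : ℕ} (S : Finset (Fin n)) :
    Fin.last n ∉ S.map Fin.castSuccEmb := by
  simp only [Finset.mem_map, Fin.castSuccEmb, Fin.castAddEmb]
  rintro ⟨x, -, hx⟩
  exact absurd hx (Fin.castSucc_lt_last x).ne

lemma mem_map_castSucc {n : ℕ} (S : Finset (Fin n)) (i : Fin n) :
    Fin.castSucc i ∈ S.map Fin.castSuccEmb ↔ i ∈ S := by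
  simp only [Finset.mem_map]
  constructor
  · rintro ⟨y, hy, he⟩
    have : y = i := Fin.castSucc_injective n he
    exact this ▸ hy
  · intro h
    exact ⟨i, h, rfl⟩

lemma exists_map_eq {n : ℕ} (S' : Finset (Fin (n+1))) (h : Fin.last n ∉ S') :
    ∃ S : Finset (Fin n), S.map Fin.castSuccEmb = S' := by
  classical
  refine ⟨S'.preimage Fin.castSucc (Set.injOn_of_injective (Fin.castSucc_injective n)), ?_⟩
  ext x
  simp only [Finset.mem_map, Finset.mem_preimage]
  constructor
  · rintro ⟨y, hy, rfl⟩
    exact hy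
  · intro hx
    have hxl : x ≠ Fin.last n := fun e => h (e ▸ hx)
    obtain ⟨y, rfl⟩ := Fin.exists_castSucc_eq.2 hxl
    exact ⟨y, hx, rfl⟩

lemma sum_split {n l : ℕ} {M : Type*} [AddCommMonoid M] (hl : 1 ≤ l)
    (F : Finset (Fin (n+1)) → M) :
    ∑ S' ∈ Finset.univ.filter (fun S' : Finset (Fin (n+1)) => S'.card = l), F S'
      = (∑ S ∈ Finset.univ.filter (fun S : Finset (Fin n) => S.card = l),
          F (S.map Fin.castSuccEmb))
      + ∑ S ∈ Finset.univ.filter (fun S : Finset (Fin n) => S.card = l - 1),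
          F (insert (Fin.last n) (S.map Fin.castSuccEmb)) := by
  classical
  rw [← Finset.sum_filter_add_sum_filter_not
    (Finset.univ.filter (fun S' : Finset (Fin (n+1)) => S'.card = l))
    (fun S' => Fin.last n ∉ S') F]
  congr 1
  · refine (Finset.sum_bij (fun (S : Finset (Fin n))
      (_ : S ∈ Finset.univ.filter (fun S : Finset (Fin n) => S.card = l))
      => S.map Fin.castSuccEmb) ?_ ?_ ?_ ?_).symm
    · intro S hS
      simp only [Finset.mem_filter, Finset.mem_univ, true_and] at hS ⊢
      exact ⟨(Finset.card_map _).trans hS, last_not_mem_map S⟩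
    · intro a _ b _ h
      exact Finset.map_injective _ h
    · intro S' hS'
      simp only [Finset.mem_filter, Finset.mem_univ, true_and] at hS'
      obtain ⟨S, rfl⟩ := exists_map_eq S' hS'.2
      refine ⟨S, ?_, rfl⟩
      simp only [Finset.mem_filter, Finset.mem_univ, true_and]
      rw [← Finset.card_map Fin.castSuccEmb]
      exact hS'.1
    · intro s _
      rfl
  · refine (Finset.sum_bij (fun (S : Finset (Fin n))
      (_ : S ∈ Finset.univ.filter (fun S : Finset (Fin n) => S.card = l - 1))
      => insert (Fin.last n) (S.map Fin.castSuccEmb)) ?_ ?_ ?_ ?_).symm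
    · intro S hS
      simp only [Finset.mem_filter, Finset.mem_univ, true_and, not_not] at hS ⊢
      refine ⟨?_, Finset.mem_insert_self _ _⟩
      rw [Finset.card_insert_of_notMem (last_not_mem_map S), Finset.card_map, hS]
      exact Nat.sub_add_cancel hl
    · intro a _ b _ h
      have : (insert (Fin.last n) (a.map Fin.castSuccEmb)).erase (Fin.last n)
          = (insert (Fin.last n) (b.map Fin.castSuccEmb)).erase (Fin.last n) := by
        rw [h]
      rw [Finset.erase_insert (last_not_mem_map a),
        Finset.erase_insert (last_not_mem_map b)] at this
      exact Finset.map_injective _ this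
    · intro S' hS'
      simp only [Finset.mem_filter, Finset.mem_univ, true_and, not_not] at hS'
      obtain ⟨S, hS⟩ := exists_map_eq (S'.erase (Fin.last n)) (Finset.notMem_erase _ _)
      refine ⟨S, ?_, ?_⟩
      · simp only [Finset.mem_filter, Finset.mem_univ, true_and]
        rw [← Finset.card_map Fin.castSuccEmb, hS, Finset.card_erase_of_mem hS'.2, hS'.1]
      · show insert (Fin.last n) (S.map Fin.castSuccEmb) = S'
        rw [hS, Finset.insert_erase hS'.2]
    · intro s _
      rfl

end Scratch
namespace Scratch

lemma sub_emb {n : ℕ} (S' : Finset (Fin (n+1))) (S : Finset (Fin n))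
    (h : ∀ i, Fin.castSucc i ∈ S' ↔ i ∈ S) (p : MvPolynomial (Fin n) ℂ) :
    sub S' (emb n p) = emb n (sub S p) := by
  show sub S' (rename Fin.castSucc p) = _
  rw [show emb n (sub S p) = ((emb n).comp (aeval fun i : Fin n =>
    if i ∈ S then 0 else X i)) p from rfl]
  rw [comp_aeval, sub, aeval_rename]
  congr 1
  congr 1
  funext i
  simp only [Function.comp_apply, apply_ite (emb n), map_zero]
  rw [show emb n (X i) = X (Fin.castSucc i) from rename_X _ _]
  simp only [h i]

lemma xI_map {n : ℕ} (S : Finset (Fin n)) :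
    xI (n+1) (S.map Fin.castSuccEmb) = emb n (xI n S) := by
  rw [xI, xI, map_prod, Finset.prod_map]
  refine Finset.prod_congr rfl fun i _ => ?_
  rw [show emb n (X i) = X (Fin.castSucc i) from rename_X _ _]
  rfl

lemma psi_emb {n l : ℕ} (hl : 1 ≤ l) (p : MvPolynomial (Fin n) ℂ) :
    psi (n+1) l (emb n p)
      = emb n (psi n l p) + X (Fin.last n) * emb n (psi n (l-1) p) := by
  rw [psi_apply, sum_split hl]
  congr 1
  · rw [psi_apply, map_sum]
    refine Finset.sum_congr rfl fun S _ => ?_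
    rw [sub_emb _ S (mem_map_castSucc S), xI_map, ← map_mul]
  · rw [psi_apply, map_sum, Finset.mul_sum]
    refine Finset.sum_congr rfl fun S _ => ?_
    have hc : ∀ i, Fin.castSucc i ∈ insert (Fin.last n) (S.map Fin.castSuccEmb) ↔ i ∈ S := by
      intro i
      rw [Finset.mem_insert, mem_map_castSucc]
      simp [(Fin.castSucc_lt_last i).ne]
    rw [sub_emb _ S hc, show xI (n+1) (insert (Fin.last n) (S.map Fin.castSuccEmb))
      = X (Fin.last n) * xI (n+1) (S.map Fin.castSuccEmb) from
        Finset.prod_insert (last_not_mem_map S), xI_map, map_mul]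
    ring

lemma psi_Xlast {n : ℕ} (j : ℕ) (p : MvPolynomial (Fin n) ℂ) :
    psi (n+1) j (X (Fin.last n) * emb n p) = X (Fin.last n) * emb n (psi n j p) := by
  rcases Nat.eq_zero_or_pos j with rfl | hj
  · rw [psi_zero, psi_zero]
  · rw [psi_apply, sum_split hj]
    have h2 : ∀ S : Finset (Fin n),
        sub (insert (Fin.last n) (S.map Fin.castSuccEmb)) (X (Fin.last n) * emb n p) = 0 := by
      intro S
      rw [map_mul, show sub (insert (Fin.last n) (S.map Fin.castSuccEmb))
        (X (Fin.last n) : MvPolynomial (Fin (n+1)) ℂ) = 0 from ?_, zero_mul]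
      rw [sub, aeval_X, if_pos (Finset.mem_insert_self _ _)]
    have hB : (∑ S ∈ Finset.univ.filter (fun S : Finset (Fin n) => S.card = j - 1),
        sub (insert (Fin.last n) (S.map Fin.castSuccEmb)) (X (Fin.last n) * emb n p)
          * xI (n+1) (insert (Fin.last n) (S.map Fin.castSuccEmb))) = 0 :=
      Finset.sum_eq_zero fun S _ => by rw [h2 S, zero_mul]
    rw [hB, add_zero]
    rw [psi_apply, map_sum, Finset.mul_sum]
    refine Finset.sum_congr rfl fun S _ => ?_
    rw [map_mul, show sub (S.map Fin.castSuccEmb) (X (Fin.last n) : MvPolynomial (Fin (n+1)) ℂ)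
      = X (Fin.last n) from ?_, sub_emb _ S (mem_map_castSucc S), xI_map, map_mul]
    · ring
    · rw [sub, aeval_X, if_neg (last_not_mem_map S)]

end Scratch
namespace Scratch

lemma pair_sum {n a : ℕ} {M : Type*} [AddCommMonoid M] (G : Finset (Fin n) → M) :
    ∑ T ∈ Finset.univ.filter (fun T : Finset (Fin n) => T.card = a), ∑ s ∈ Tᶜ, G (insert s T)
      = ∑ U ∈ Finset.univ.filter (fun U : Finset (Fin n) => U.card = a + 1), (a+1) • G U := by
  classical
  have hR : ∀ U ∈ Finset.univ.filter (fun U : Finset (Fin n) => U.card = a + 1),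
      (a+1) • G U = ∑ _s ∈ U, G U := by
    intro U hU
    rw [Finset.sum_const, (Finset.mem_filter.1 hU).2]
  rw [Finset.sum_congr rfl hR, Finset.sum_sigma', Finset.sum_sigma']
  refine Finset.sum_bij (fun (x : Σ _T : Finset (Fin n), Fin n)
    (hx : x ∈ (Finset.univ.filter (fun T : Finset (Fin n) => T.card = a)).sigma (fun T => Tᶜ))
    => (⟨insert x.2 x.1, x.2⟩ : Σ _U : Finset (Fin n), Fin n)) ?_ ?_ ?_ ?_
  · rintro ⟨T, s⟩ hx
    simp only [Finset.mem_sigma, Finset.mem_filter, Finset.mem_univ, true_and,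
      Finset.mem_compl] at hx ⊢
    exact ⟨by rw [Finset.card_insert_of_notMem hx.2, hx.1], Finset.mem_insert_self _ _⟩
  · rintro ⟨T, s⟩ hx ⟨T', s'⟩ hx' h
    simp only [Finset.mem_sigma, Finset.mem_filter, Finset.mem_univ, true_and,
      Finset.mem_compl] at hx hx'
    simp only [Sigma.mk.inj_iff] at h
    obtain ⟨h1, h2⟩ := h
    have hs : s = s' := eq_of_heq h2
    subst hs
    have : T = T' := by
      have e1 : (insert s T).erase s = T := Finset.erase_insert hx.2
      have e2 : (insert s T').erase s = T' := Finset.erase_insert hx'.2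
      rw [← e1, ← e2, h1]
    subst this
    rfl
  · rintro ⟨U, s⟩ hx
    simp only [Finset.mem_sigma, Finset.mem_filter, Finset.mem_univ, true_and] at hx
    refine ⟨⟨U.erase s, s⟩, ?_, ?_⟩
    · simp only [Finset.mem_sigma, Finset.mem_filter, Finset.mem_univ, true_and,
        Finset.mem_compl]
      exact ⟨by rw [Finset.card_erase_of_mem hx.2, hx.1]; rfl, Finset.notMem_erase _ _⟩
    · simp only [Sigma.mk.inj_iff]
      exact ⟨by rw [Finset.insert_erase hx.2], HEq.rfl⟩
  · rintro ⟨T, s⟩ hx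
    rfl

lemma psi_comp_one {n : ℕ} (a : ℕ) (p : MvPolynomial (Fin n) ℂ) :
    psi n a (psi n 1 p) = (a+1) • psi n (a+1) p := by
  classical
  rw [psi_apply n a, psi_apply n 1]
  have step : ∀ T : Finset (Fin n),
      sub T (∑ S ∈ Finset.univ.filter (fun S : Finset (Fin n) => S.card = 1),
        sub S p * xI n S) * xI n T
      = ∑ s ∈ Tᶜ, (sub (insert s T) p * xI n (insert s T)) := by
    intro T
    rw [map_sum, singleton_sum (fun S => sub T (sub S p * xI n S)), Finset.sum_mul]
    have term : ∀ s : Fin n, sub T (sub {s} p * xI n {s}) * xI n T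
        = if s ∈ T then 0 else sub (insert s T) p * xI n (insert s T) := by
      intro s
      rw [map_mul, sub_sub, show ({s} : Finset (Fin n)) ∪ T = insert s T from (Finset.insert_eq s T).symm,
        show xI n {s} = X s by rw [xI, Finset.prod_singleton],
        show sub T (X s : MvPolynomial (Fin n) ℂ) = if s ∈ T then 0 else X s from aeval_X _ _]
      split_ifs with h
      · rw [mul_zero, zero_mul]
      · rw [show xI n (insert s T) = X s * xI n T from Finset.prod_insert h]
        ring
    rw [Finset.sum_congr rfl (fun s _ => term s)]
    rw [Finset.sum_ite, Finset.sum_const_zero, zero_add]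
    refine Finset.sum_congr ?_ (fun _ _ => rfl)
    ext s
    simp [Finset.mem_compl]
  rw [Finset.sum_congr rfl (fun T _ => step T), pair_sum (fun U => sub U p * xI n U), ← Finset.smul_sum, psi_apply]

end Scratch
namespace Scratch

lemma compl_map {n : ℕ} (J : Finset (Fin n)) :
    (J.map Fin.castSuccEmb)ᶜ = insert (Fin.last n) ((Jᶜ).map Fin.castSuccEmb) := by
  ext x
  by_cases hx : x = Fin.last n
  · subst hx
    simp only [Finset.mem_compl, last_not_mem_map, not_false_iff, Finset.mem_insert, true_or,
      iff_true]
  · obtain ⟨y, rfl⟩ := Fin.exists_castSucc_eq.2 hx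
    simp only [Finset.mem_compl, mem_map_castSucc, Finset.mem_insert,
      (Fin.castSucc_lt_last y).ne, false_or]

lemma compl_insert_map {n : ℕ} (J : Finset (Fin n)) :
    (insert (Fin.last n) (J.map Fin.castSuccEmb))ᶜ = (Jᶜ).map Fin.castSuccEmb := by
  rw [Finset.compl_insert, compl_map, Finset.erase_insert (last_not_mem_map _)]

lemma Aspace_emb {n k : ℕ} {p : MvPolynomial (Fin n) ℂ} (hp : p ∈ Aspace n k) :
    emb n p ∈ Aspace (n+1) k := by
  refine Submodule.span_induction ?_ ?_ ?_ ?_ hp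
  · rintro f ⟨I, hI, rfl⟩
    exact Submodule.subset_span ⟨I.map Fin.castSuccEmb, (Finset.card_map _).trans hI,
      (xI_map I).symm⟩
  · rw [map_zero]; exact Submodule.zero_mem _
  · intro f g _ _ hf hg
    rw [map_add]; exact Submodule.add_mem _ hf hg
  · intro c f _ hf
    rw [map_smul]; exact Submodule.smul_mem _ c hf

lemma Aspace_Xlast {n k : ℕ} {p : MvPolynomial (Fin n) ℂ} (hp : p ∈ Aspace n k) :
    X (Fin.last n) * emb n p ∈ Aspace (n+1) (k+1) := by
  refine Submodule.span_induction ?_ ?_ ?_ ?_ hp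
  · rintro f ⟨I, hI, rfl⟩
    refine Submodule.subset_span ⟨insert (Fin.last n) (I.map Fin.castSuccEmb), ?_, ?_⟩
    · rw [Finset.card_insert_of_notMem (last_not_mem_map I), Finset.card_map, hI]
    · rw [show xI (n+1) (insert (Fin.last n) (I.map Fin.castSuccEmb))
        = X (Fin.last n) * xI (n+1) (I.map Fin.castSuccEmb) from
          Finset.prod_insert (last_not_mem_map I), xI_map]
  · rw [map_zero, mul_zero]; exact Submodule.zero_mem _
  · intro f g _ _ hf hg
    rw [map_add, mul_add]; exact Submodule.add_mem _ hf hg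
  · intro c f _ hf
    rw [map_smul, mul_smul_comm]; exact Submodule.smul_mem _ c hf

lemma Aspace_psi_one {n k : ℕ} {p : MvPolynomial (Fin n) ℂ} (hp : p ∈ Aspace n k) :
    psi n 1 p ∈ Aspace n (k+1) := by
  refine Submodule.span_induction ?_ ?_ ?_ ?_ hp
  · rintro f ⟨I, hI, rfl⟩
    rw [psi_apply, singleton_sum (fun S => sub S (xI n I) * xI n S)]
    refine Submodule.sum_mem _ fun s _ => ?_
    by_cases hs : s ∈ I
    · rw [show sub {s} (xI n I) = 0 from ?_, zero_mul]
      · exact Submodule.zero_mem _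
      · rw [xI, sub]
        rw [map_prod]
        refine Finset.prod_eq_zero hs ?_
        rw [aeval_X, if_pos (Finset.mem_singleton_self s)]
    · rw [show sub {s} (xI n I) = xI n I from ?_,
        show xI n {s} = X s by rw [xI, Finset.prod_singleton]]
      · refine Submodule.subset_span ⟨insert s I, ?_, ?_⟩
        · rw [Finset.card_insert_of_notMem hs, hI]
        · rw [show xI n (insert s I) = X s * xI n I from Finset.prod_insert hs]
          ring
      · rw [xI, sub, map_prod]
        refine Finset.prod_congr rfl fun i hi => ?_
        rw [aeval_X, if_neg]
        rw [Finset.mem_singleton]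
        rintro rfl
        exact hs hi
  · rw [map_zero]; exact Submodule.zero_mem _
  · intro f g _ _ hf hg
    rw [map_add]; exact Submodule.add_mem _ hf hg
  · intro c f _ hf
    rw [map_smul]; exact Submodule.smul_mem _ c hf

end Scratch
namespace Scratch

lemma A0_emb {n k : ℕ} {p : MvPolynomial (Fin n) ℂ} (hp : p ∈ A0space n k) :
    emb n p ∈ A0space (n+1) k := by
  refine ⟨Aspace_emb hp.1, fun J' hJ' => ?_⟩
  by_cases hl : Fin.last n ∈ J'
  · exact Finset.sum_eq_zero fun j' _ =>
      coeffI_emb_zero p _ (Finset.mem_insert_of_mem hl)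
  · obtain ⟨J, rfl⟩ := exists_map_eq J' hl
    rw [compl_map, Finset.sum_insert (last_not_mem_map _)]
    rw [coeffI_emb_zero p _ (Finset.mem_insert_self _ _), zero_add, Finset.sum_map]
    have : ∀ j ∈ Jᶜ, coeffI (emb n p) (insert (Fin.castSuccEmb j) (J.map Fin.castSuccEmb))
        = coeffI p (insert j J) := by
      intro j _
      rw [show insert (Fin.castSuccEmb j) (J.map Fin.castSuccEmb)
        = (insert j J).map Fin.castSuccEmb from (Finset.map_insert _ _ _).symm, coeffI_emb]
    rw [Finset.sum_congr rfl this]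
    refine hp.2 J ?_
    rw [← Finset.card_map Fin.castSuccEmb]
    exact hJ'

end Scratch
namespace Scratch

lemma h0_mem {n k : ℕ} (hkn : 2 * k ≤ n) {p : MvPolynomial (Fin n) ℂ} (hp : p ∈ A0space n k) :
    emb n (psi n 1 p) - ((n : ℂ) - 2 * k) • (X (Fin.last n) * emb n p)
      ∈ A0space (n+1) (k+1) := by
  classical
  set c : ℂ := (n : ℂ) - 2 * k with hc
  set q : MvPolynomial (Fin (n+1)) ℂ
    := emb n (psi n 1 p) - c • (X (Fin.last n) * emb n p) with hq
  have coeffq : ∀ I : Finset (Fin (n+1)),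
      coeffI q I = coeffI (emb n (psi n 1 p)) I
        - c * coeffI (X (Fin.last n) * emb n p) I := by
    intro I
    simp only [hq, coeffI, MvPolynomial.coeff_sub, MvPolynomial.coeff_smul, smul_eq_mul]
  refine ⟨?_, ?_⟩
  · exact Submodule.sub_mem _ (Aspace_emb (Aspace_psi_one hp.1))
      (Submodule.smul_mem _ _ (Aspace_Xlast hp.1))
  · intro J' hJ'
    rw [Nat.add_sub_cancel] at hJ'
    by_cases hl : Fin.last n ∈ J'
    · obtain ⟨J₀, hJ₀⟩ := exists_map_eq (J'.erase (Fin.last n)) (Finset.notMem_erase _ _)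
      have hJ'eq : J' = insert (Fin.last n) (J₀.map Fin.castSuccEmb) := by
        rw [hJ₀, Finset.insert_erase hl]
      have hcard : J₀.card = k - 1 := by
        have : (J'.erase (Fin.last n)).card = k - 1 := by
          rw [Finset.card_erase_of_mem hl, hJ']
        rw [← this, ← hJ₀, Finset.card_map]
      have key : ∀ j ∈ J₀ᶜ,
          coeffI q (insert (Fin.castSuccEmb j) (insert (Fin.last n) (J₀.map Fin.castSuccEmb)))
          = - c * coeffI p (insert j J₀) := by
        intro j _
        rw [coeffq, coeffI_emb_zero _ _ (Finset.mem_insert_of_mem (Finset.mem_insert_self _ _))]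
        have hI : insert (Fin.castSuccEmb j) (insert (Fin.last n) (J₀.map Fin.castSuccEmb))
            = insert (Fin.last n) (insert (Fin.castSuccEmb j) (J₀.map Fin.castSuccEmb)) := by
          rw [Finset.insert_comm]
        rw [hI, coeffI_Xlast_mul _ _ (Finset.mem_insert_self _ _),
          Finset.erase_insert (by
            intro hmem
            rcases Finset.mem_insert.1 hmem with h | h
            · exact absurd h.symm (Fin.castSucc_lt_last j).ne
            · exact last_not_mem_map J₀ h)]
        rw [show insert (Fin.castSuccEmb j) (J₀.map Fin.castSuccEmb)
          = (insert j J₀).map Fin.castSuccEmb from (Finset.map_insert _ _ _).symm, coeffI_emb]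
        ring
      rw [hJ'eq, compl_insert_map, Finset.sum_map, Finset.sum_congr rfl key]
      rw [← Finset.mul_sum, hp.2 J₀ hcard, mul_zero]
    · obtain ⟨J, rfl⟩ := exists_map_eq J' hl
      have hJcard : J.card = k := by rw [← Finset.card_map Fin.castSuccEmb]; exact hJ'
      have hcompl : ∀ s ∈ J, ∑ j ∈ Jᶜ, coeffI p (insert j (J.erase s)) = - coeffI p J := by
        intro s hs
        have h0 := hp.2 (J.erase s) (by rw [Finset.card_erase_of_mem hs, hJcard])
        rw [Finset.compl_erase, Finset.sum_insert (by simpa using hs),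
          Finset.insert_erase hs] at h0
        linear_combination h0
      have key : ∀ j ∈ Jᶜ, coeffI q (insert (Fin.castSuccEmb j) (J.map Fin.castSuccEmb))
          = coeffI p J + ∑ s ∈ J, coeffI p (insert j (J.erase s)) := by
        intro j hj
        have hjJ : j ∉ J := by simpa using hj
        have hmap : insert (Fin.castSuccEmb j) (J.map Fin.castSuccEmb)
            = (insert j J).map Fin.castSuccEmb := (Finset.map_insert _ _ _).symm
        rw [coeffq, hmap, coeffI_Xlast_mul_zero _ _ (last_not_mem_map _), mul_zero, sub_zero,
          coeffI_emb, coeffI_psi_one, Finset.sum_insert hjJ, Finset.erase_insert hjJ]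
        congr 1
        refine Finset.sum_congr rfl fun s hs => ?_
        rw [Finset.erase_insert_of_ne (by rintro rfl; exact hjJ hs)]
      rw [compl_map, Finset.sum_insert (last_not_mem_map _), Finset.sum_map,
        Finset.sum_congr rfl key]
      have hlast : coeffI q (insert (Fin.last n) (J.map Fin.castSuccEmb))
          = - c * coeffI p J := by
        rw [coeffq, coeffI_emb_zero _ _ (Finset.mem_insert_self _ _),
          coeffI_Xlast_mul _ _ (Finset.mem_insert_self _ _),
          Finset.erase_insert (last_not_mem_map _), coeffI_emb]
        ring
      rw [hlast, Finset.sum_add_distrib, Finset.sum_const, Finset.sum_comm,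
        Finset.sum_congr rfl hcompl, Finset.sum_const]
      rw [Finset.card_compl, Fintype.card_fin, hJcard]
      have hkn' : k ≤ n := le_trans (Nat.le_mul_of_pos_left k (by norm_num)) hkn
      rw [nsmul_eq_mul, nsmul_eq_mul, Nat.cast_sub hkn']
      rw [hc]
      ring

end Scratch
open Scratch

/-- (Lemma 9, case `ξ_{n+1} = 0`.)  Let `0 ≤ k < m`, `2m ≤ n`, `f₀ ∈ A⁰_{n,k}` and
`f = ψ_n^{m-k}(f₀) ∈ A_{n,m} ⊆ A_{n+1,m}`.  With
`g₁ = ((n-m-k+1)/(n-2k+1))·(f + x_{n+1}·ψ_n^{m-k-1}(f₀))` and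
`g₂ = (1/(n-2k+1))·((m-k)·f - (n-m-k+1)·x_{n+1}·ψ_n^{m-k-1}(f₀))`,
we have `f = g₁ + g₂`, `g₁ ∈ H^k_{n+1,m}` and `g₂ ∈ H^{k+1}_{n+1,m}`. -/
theorem branching_decomposition_xi_zero (n k m : ℕ) (hk : k < m) (hm : 2 * m ≤ n)
    (f₀ : MvPolynomial (Fin n) ℂ) (hf₀ : f₀ ∈ A0space n k) :
    emb n (psi n (m - k) f₀) =
        (((n : ℂ) - m - k + 1) / ((n : ℂ) - 2 * k + 1)) •
          (emb n (psi n (m - k) f₀) + X (Fin.last n) * emb n (psi n (m - k - 1) f₀))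
      + ((1 : ℂ) / ((n : ℂ) - 2 * k + 1)) •
          (((m : ℂ) - k) • emb n (psi n (m - k) f₀)
            - ((n : ℂ) - m - k + 1) • (X (Fin.last n) * emb n (psi n (m - k - 1) f₀))) ∧
    (((n : ℂ) - m - k + 1) / ((n : ℂ) - 2 * k + 1)) •
        (emb n (psi n (m - k) f₀) + X (Fin.last n) * emb n (psi n (m - k - 1) f₀))
      ∈ Hspace (n + 1) m k ∧
    ((1 : ℂ) / ((n : ℂ) - 2 * k + 1)) •
        (((m : ℂ) - k) • emb n (psi n (m - k) f₀)
          - ((n : ℂ) - m - k + 1) • (X (Fin.last n) * emb n (psi n (m - k - 1) f₀)))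
      ∈ Hspace (n + 1) m (k + 1) := by
  have hkn : 2 * k ≤ n := by omega
  have hl : 1 ≤ m - k := by omega
  have hD : ((n : ℂ) - 2 * k + 1) ≠ 0 := by
    have : ((n : ℂ) - 2 * k + 1) = ((n - 2 * k + 1 : ℕ) : ℂ) := by
      push_cast [Nat.cast_sub hkn]
      ring
    rw [this]
    exact Nat.cast_ne_zero.2 (by omega)
  refine ⟨?_, ?_, ?_⟩
  · match_scalars
    · field_simp
      rw [eq_div_iff (by rw [mul_comm]; exact hD)]
      ring
    · field_simp
      ring
  · -- g₁ ∈ H^k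
    have hemb : emb n f₀ ∈ A0space (n+1) k := A0_emb hf₀
    have e1 : psi (n+1) (m-k) (emb n f₀)
        = emb n (psi n (m-k) f₀) + X (Fin.last n) * emb n (psi n (m-k-1) f₀) :=
      psi_emb hl f₀
    refine Submodule.mem_map.2 ⟨(((n : ℂ) - m - k + 1) / ((n : ℂ) - 2 * k + 1)) • emb n f₀,
      Submodule.smul_mem _ _ hemb, ?_⟩
    rw [map_smul, e1]
  · -- g₂ ∈ H^{k+1}
    have hh : emb n (psi n 1 f₀) - ((n : ℂ) - 2 * k) • (X (Fin.last n) * emb n f₀)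
        ∈ A0space (n+1) (k+1) := h0_mem hkn hf₀
    refine Submodule.mem_map.2 ⟨((1 : ℂ) / ((n : ℂ) - 2 * k + 1)) •
      (emb n (psi n 1 f₀) - ((n : ℂ) - 2 * k) • (X (Fin.last n) * emb n f₀)),
      Submodule.smul_mem _ _ hh, ?_⟩
    rw [map_smul, show m - (k+1) = m - k - 1 from (Nat.sub_sub m k 1).symm, map_sub, map_smul,
      psi_Xlast (m - k - 1) f₀]
    have hmk : ((m : ℂ) - k) = ((m - k : ℕ) : ℂ) := by
      push_cast [Nat.cast_sub hk.le]; ring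
    rcases eq_or_lt_of_le hl with heq | hlt
    · -- m - k = 1
      have h1 : m - k = 1 := heq.symm
      rw [show m - k - 1 = 0 by omega, psi_zero, psi_zero, h1]
      have hm1 : ((m : ℂ) - k) = 1 := by
        have : m = k + 1 := by omega
        rw [this]; push_cast; ring
      have hn1 : ((n : ℂ) - m - k + 1) = (n : ℂ) - 2 * k := by
        have : (m : ℂ) = (k : ℂ) + 1 := by
          have : m = k + 1 := by omega
          rw [this]; push_cast; ring
        rw [this]; ring
      rw [hm1, hn1, one_smul]
    · -- m - k ≥ 2
      have hl1 : 1 ≤ m - k - 1 := by omega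
      rw [psi_emb hl1 (psi n 1 f₀), psi_comp_one (m - k - 1) f₀, psi_comp_one (m - k - 1 - 1) f₀,
        show m - k - 1 + 1 = m - k by omega, show m - k - 1 - 1 + 1 = m - k - 1 by omega]
      rw [map_nsmul, map_nsmul]
      rw [show ((m - k : ℕ) • (emb n (psi n (m-k) f₀)))
          = ((m : ℂ) - k) • emb n (psi n (m-k) f₀) from by
        rw [← Nat.cast_smul_eq_nsmul ℂ, Nat.cast_sub hk.le]]
      rw [show ((m - k - 1 : ℕ) • (emb n (psi n (m-k-1) f₀)))
          = ((m : ℂ) - k - 1) • emb n (psi n (m-k-1) f₀) from by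
        rw [← Nat.cast_smul_eq_nsmul ℂ, Nat.cast_sub hl, Nat.cast_sub hk.le, Nat.cast_one]]
      rw [mul_smul_comm]
      match_scalars
      · field_simp
      · field_simp
        ring

end
end

section
/- Let n, k, m be integers with 0 ≤ k < m and 2m ≤ n, let f₀ ∈ A⁰_{n,k}, and set f = ψ_n^{m−k}(f₀) ∈ A_{n,m} ⊆ A_{n+1,m}. Define g₁ = ((n−m−k+1)/(n−2k+1)) · ( f + x_{n+1}·ψ_n^{m−k−1}(f₀) ) and g₂ = (1/(n−2k+1)) · ( (m−k)·f − (n−m−k+1)·x_{n+1}·ψ_n^{m−k−1}(f₀) ) in A_{n+1,m}. Then ‖g₁‖² = ((n−m−k+1)/(n−2k+1)) · ‖f‖² and ‖g₂‖² = ((m−k)/(n−2k+1)) · ‖f‖². -/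
open MvPolynomial Finset

noncomputable section

def expo {N : ℕ} (I : Finset (Fin N)) : Fin N →₀ ℕ := ∑ i ∈ I, Finsupp.single i 1

lemma expo_apply {N : ℕ} (I : Finset (Fin N)) (j : Fin N) :
    expo I j = if j ∈ I then 1 else 0 := by
  classical
  simp [expo, Finset.sum_apply', Finsupp.single_apply]

lemma expo_inj {N : ℕ} : Function.Injective (expo (N := N)) := by
  intro I J h
  ext j
  have := congrArg (fun f => f j) h
  simp only [expo_apply] at this
  by_cases hI : j ∈ I <;> by_cases hJ : j ∈ J <;> simp_all

lemma expo_insert {N : ℕ} {a : Fin N} {I : Finset (Fin N)} (h : a ∉ I) :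
    expo (insert a I) = Finsupp.single a 1 + expo I := by
  rw [expo, Finset.sum_insert h]; rfl

lemma xI_eq {n : ℕ} (I : Finset (Fin n)) : xI n I = monomial (expo I) 1 := by
  classical
  induction I using Finset.induction with
  | empty => simp [xI, expo]
  | insert _ _ h ih =>
    rw [xI, Finset.prod_insert h, ← xI, ih, expo_insert h, monomial_single_add, pow_one]

/-- master norm lemma -/
lemma sqNorm_sum_monomial {N : ℕ} {ι : Type*} [DecidableEq ι]
    (T : Finset ι) (E : ι → (Fin N →₀ ℕ)) (hE : Set.InjOn E T) (a : ι → ℂ) :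
    sqNorm (∑ i ∈ T, monomial (E i) (a i)) = ∑ i ∈ T, Complex.normSq (a i) := by
  classical
  set p := ∑ i ∈ T, monomial (E i) (a i) with hp
  have hcoeff : ∀ i ∈ T, coeff (E i) p = a i := by
    intro i hi
    rw [hp, coeff_sum]
    rw [Finset.sum_eq_single_of_mem i hi]
    · simp [coeff_monomial]
    · intro j hj hne
      rw [coeff_monomial, if_neg (fun h => hne (hE hj hi h))]
  have hsupp : p.support ⊆ T.image E := by
    intro d hd
    by_contra hc
    apply MvPolynomial.mem_support_iff.mp hd
    rw [hp, coeff_sum]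
    apply Finset.sum_eq_zero
    intro j hj
    rw [coeff_monomial, if_neg]
    intro h; exact hc (h ▸ Finset.mem_image_of_mem E hj)
  rw [sqNorm, Finset.sum_subset hsupp (by
    intro d _ hd
    rw [MvPolynomial.notMem_support_iff.mp hd]; simp)]
  rw [Finset.sum_image (fun i hi j hj h => hE hi hj h)]
  exact Finset.sum_congr rfl fun i hi => by rw [hcoeff i hi]

section reindex
variable {α : Type*} [DecidableEq α] {β : Type*} [AddCommMonoid β]

/-- Reindexing pairs `(M, x ∈ M)` at level `t+1` as `(J, x ∈ A \ J)` at level `t`. -/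
lemma pair_erase (A : Finset α) (t : ℕ) (F : Finset α → α → β) :
    ∑ M ∈ A.powersetCard (t + 1), ∑ x ∈ M, F (M.erase x) x
      = ∑ J ∈ A.powersetCard t, ∑ x ∈ A \ J, F J x := by
  rw [Finset.sum_sigma', Finset.sum_sigma']
  refine Finset.sum_nbij' (fun p => ⟨p.1.erase p.2, p.2⟩) (fun q => ⟨insert q.2 q.1, q.2⟩)
    ?_ ?_ ?_ ?_ ?_
  · rintro ⟨M, x⟩ hp
    simp only [Finset.mem_sigma, Finset.mem_powersetCard] at hp ⊢
    obtain ⟨⟨hMA, hMc⟩, hx⟩ := hp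
    refine ⟨⟨(Finset.erase_subset _ _).trans hMA, by rw [Finset.card_erase_of_mem hx, hMc]; rfl⟩, ?_⟩
    exact Finset.mem_sdiff.mpr ⟨hMA hx, Finset.notMem_erase _ _⟩
  · rintro ⟨J, x⟩ hq
    simp only [Finset.mem_sigma, Finset.mem_powersetCard, Finset.mem_sdiff] at hq ⊢
    obtain ⟨⟨hJA, hJc⟩, hxA, hxJ⟩ := hq
    exact ⟨⟨Finset.insert_subset hxA hJA, by rw [Finset.card_insert_of_notMem hxJ, hJc]⟩,
      Finset.mem_insert_self _ _⟩
  · rintro ⟨M, x⟩ hp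
    simp only [Finset.mem_sigma] at hp
    simp [Finset.insert_erase hp.2]
  · rintro ⟨J, x⟩ hq
    simp only [Finset.mem_sigma, Finset.mem_sdiff] at hq
    simp [Finset.erase_insert hq.2.2]
  · rintro ⟨M, x⟩ _; rfl

/-- Reindexing pairs `(I, S)` disjoint as `(M = I ∪ S, I ⊆ M)`. -/
lemma pair_union (A : Finset α) (k l : ℕ) (F : Finset α → Finset α → β) :
    ∑ I ∈ A.powersetCard k,
        ∑ S ∈ (A.powersetCard l).filter (fun S => Disjoint I S), F I (I ∪ S)
      = ∑ M ∈ A.powersetCard (k + l), ∑ I ∈ M.powersetCard k, F I M := by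
  rw [Finset.sum_sigma', Finset.sum_sigma']
  refine Finset.sum_nbij' (fun p => ⟨p.1 ∪ p.2, p.1⟩) (fun q => ⟨q.2, q.1 \ q.2⟩)
    ?_ ?_ ?_ ?_ ?_
  · rintro ⟨I, S⟩ hp
    simp only [Finset.mem_sigma, Finset.mem_powersetCard, Finset.mem_filter] at hp ⊢
    obtain ⟨⟨hIA, hIc⟩, ⟨hSA, hSc⟩, hdis⟩ := hp
    exact ⟨⟨Finset.union_subset hIA hSA, by rw [Finset.card_union_of_disjoint hdis, hIc, hSc]⟩,
      Finset.subset_union_left, hIc⟩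
  · rintro ⟨M, I⟩ hq
    simp only [Finset.mem_sigma, Finset.mem_powersetCard, Finset.mem_filter] at hq ⊢
    obtain ⟨⟨hMA, hMc⟩, hIM, hIc⟩ := hq
    refine ⟨⟨hIM.trans hMA, hIc⟩, ⟨⟨(Finset.sdiff_subset).trans hMA, ?_⟩, Finset.disjoint_sdiff⟩⟩
    rw [Finset.card_sdiff_of_subset hIM, hMc, hIc, Nat.add_sub_cancel_left]
  · rintro ⟨I, S⟩ hp
    simp only [Finset.mem_sigma, Finset.mem_filter] at hp
    simp [Finset.union_sdiff_cancel_left hp.2.2]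
  · rintro ⟨M, I⟩ hq
    simp only [Finset.mem_sigma, Finset.mem_powersetCard] at hq
    simp [Finset.union_sdiff_of_subset hq.2.1]
  · rintro ⟨I, S⟩ _; rfl

end reindex

section repr
variable {n : ℕ}

lemma coeffI_eq (f : MvPolynomial (Fin n) ℂ) (I : Finset (Fin n)) :
    coeffI f I = coeff (expo I) f := rfl

lemma coeffI_monomial (J I : Finset (Fin n)) (a : ℂ) :
    coeffI (monomial (expo J) a) I = if I = J then a else 0 := by
  rw [coeffI_eq, coeff_monomial]
  by_cases h : I = J
  · simp [h]
  · rw [if_neg (fun hc => h (expo_inj hc).symm), if_neg h]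

lemma expo_support (I : Finset (Fin n)) : (expo I).support = I := by
  ext j
  rw [Finsupp.mem_support_iff, expo_apply]
  by_cases h : j ∈ I <;> simp [h]

lemma expo_union {I S : Finset (Fin n)} (h : Disjoint I S) :
    expo (I ∪ S) = expo I + expo S := by
  rw [expo, expo, expo, Finset.sum_union h]

lemma Aspace_repr {k : ℕ} {f : MvPolynomial (Fin n) ℂ} (hf : f ∈ Aspace n k) :
    f = ∑ I ∈ Finset.powersetCard k Finset.univ, monomial (expo I) (coeffI f I) := by
  induction hf using Submodule.span_induction with
  | mem x hx =>
    obtain ⟨I₀, hI₀, rfl⟩ := hx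
    rw [xI_eq]
    rw [Finset.sum_congr rfl (fun I _ => by rw [coeffI_monomial])]
    rw [Finset.sum_eq_single_of_mem I₀ (Finset.mem_powersetCard_univ.mpr hI₀)]
    · simp
    · intro I _ hne
      rw [if_neg hne, map_zero]
  | zero => simp [coeffI_eq]
  | add x y hx hy ihx ihy =>
    conv_lhs => rw [ihx, ihy]
    rw [← Finset.sum_add_distrib]
    refine Finset.sum_congr rfl fun I _ => ?_
    rw [← map_add]
    congr 1
  | smul a x hx ihx =>
    conv_lhs => rw [ihx]
    rw [Finset.smul_sum]
    refine Finset.sum_congr rfl fun I _ => ?_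
    rw [← map_smul]
    congr 1

lemma aeval_kill (S I : Finset (Fin n)) (a : ℂ) :
    (aeval (fun i : Fin n => if i ∈ S then 0 else X i)) (monomial (expo I) a)
      = if Disjoint I S then monomial (expo I) a else 0 := by
  rw [aeval_monomial, Finsupp.prod, expo_support]
  by_cases h : Disjoint I S
  · rw [if_pos h,
      Finset.prod_congr rfl (fun i hi => by
        rw [expo_apply, if_pos hi, pow_one, if_neg (Finset.disjoint_left.mp h hi)]
        : ∀ i ∈ I, ((if i ∈ S then (0:MvPolynomial (Fin n) ℂ) else X i)) ^ (expo I i) = X i)]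
    rw [← xI, xI_eq, algebraMap_eq, C_mul_monomial, mul_one]
  · rw [if_neg h]
    obtain ⟨i, hiI, hiS⟩ := Finset.not_disjoint_iff.mp h
    rw [Finset.prod_eq_zero hiI (by
      rw [expo_apply, if_pos hiI, pow_one, if_pos hiS]), mul_zero]

lemma psi_monomial (l : ℕ) (I : Finset (Fin n)) (a : ℂ) :
    psi n l (monomial (expo I) a)
      = ∑ S ∈ (Finset.powersetCard l Finset.univ).filter (fun S => Disjoint I S),
          monomial (expo (I ∪ S)) a := by
  rw [psi, LinearMap.sum_apply]
  have h1 : Finset.univ.filter (fun S : Finset (Fin n) => S.card = l)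
      = Finset.powersetCard l Finset.univ := by
    ext S; simp [Finset.mem_powersetCard_univ]
  rw [h1, Finset.sum_filter]
  refine Finset.sum_congr rfl fun S _ => ?_
  simp only [LinearMap.comp_apply, AlgHom.toLinearMap_apply, LinearMap.mulRight_apply]
  rw [aeval_kill]
  by_cases h : Disjoint I S
  · rw [if_pos h, if_pos h, xI_eq, monomial_mul, mul_one, expo_union h]
  · rw [if_neg h, if_neg h, zero_mul]

lemma psi_repr {k : ℕ} (l : ℕ) {f : MvPolynomial (Fin n) ℂ} (hf : f ∈ Aspace n k) :
    psi n l f = ∑ M ∈ Finset.powersetCard (k + l) Finset.univ,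
      monomial (expo M) (∑ I ∈ M.powersetCard k, coeffI f I) := by
  conv_lhs => rw [Aspace_repr hf, map_sum]
  rw [Finset.sum_congr rfl (fun I _ => psi_monomial l I (coeffI f I))]
  rw [pair_union Finset.univ k l (fun I M => monomial (expo M) (coeffI f I))]
  exact Finset.sum_congr rfl fun M _ => by rw [← map_sum]

end repr

section key
variable {n k l : ℕ} (c : Finset (Fin n) → ℂ)

lemma claim1 {M : Finset (Fin n)} (hM : M.card = k + l) :
    ∑ x ∈ M, ∑ I ∈ (M.erase x).powersetCard k, c I
      = (l : ℂ) * ∑ I ∈ M.powersetCard k, c I := by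
  have h1 : ∀ x, (M.erase x).powersetCard k = (M.powersetCard k).filter (fun I => x ∉ I) := by
    intro x
    ext I
    simp only [Finset.mem_powersetCard, Finset.mem_filter, Finset.subset_erase]
    tauto
  calc ∑ x ∈ M, ∑ I ∈ (M.erase x).powersetCard k, c I
      = ∑ x ∈ M, ∑ I ∈ M.powersetCard k, if x ∉ I then c I else 0 := by
        refine Finset.sum_congr rfl fun x _ => ?_
        rw [h1 x, Finset.sum_filter]
    _ = ∑ I ∈ M.powersetCard k, ∑ x ∈ M, if x ∉ I then c I else 0 := Finset.sum_comm
    _ = ∑ I ∈ M.powersetCard k, (l : ℂ) * c I := by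
        refine Finset.sum_congr rfl fun I hI => ?_
        obtain ⟨hIM, hIc⟩ := Finset.mem_powersetCard.mp hI
        rw [← Finset.sum_filter, Finset.sum_const, ← Finset.sdiff_eq_filter,
          Finset.card_sdiff_of_subset hIM, hM, hIc, Nat.add_sub_cancel_left, nsmul_eq_mul]
    _ = (l : ℂ) * ∑ I ∈ M.powersetCard k, c I := by rw [Finset.mul_sum]

lemma claim2 (hn : k + l ≤ n) (hl : 1 ≤ l)
    (Hc : ∀ J : Finset (Fin n), J.card = k - 1 → ∑ j ∈ Jᶜ, c (insert j J) = 0)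
    {N : Finset (Fin n)} (hN : N.card = k + l - 1) :
    ∑ x ∈ Nᶜ, ∑ I ∈ (insert x N).powersetCard k, c I
      = ((n : ℂ) - 2 * k - l + 1) * ∑ I ∈ N.powersetCard k, c I := by
  have hNccard : Nᶜ.card = n - (k + l - 1) := by
    rw [Finset.card_compl, hN, Fintype.card_fin]
  rcases Nat.eq_zero_or_pos k with hk | hk
  · subst hk
    simp only [Finset.powersetCard_zero, Finset.sum_singleton]
    rw [Finset.sum_const, hNccard, nsmul_eq_mul]
    congr 1
    have h1 : 0 + l - 1 ≤ n := by omega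
    have h2 : (((0:ℕ) + l - 1 : ℕ) : ℂ) = (l : ℂ) - 1 := by
      have : (0:ℕ) + l - 1 = l - 1 := by omega
      rw [this, Nat.cast_sub hl, Nat.cast_one]
    rw [Nat.cast_sub h1, h2]
    push_cast
    ring
  · obtain ⟨k', rfl⟩ : ∃ k', k = k' + 1 := ⟨k - 1, by omega⟩
    have step : ∀ x ∈ Nᶜ, ∑ I ∈ (insert x N).powersetCard (k' + 1), c I
        = (∑ I ∈ N.powersetCard (k' + 1), c I)
          + ∑ J ∈ N.powersetCard k', c (insert x J) := by
      intro x hx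
      have hxN : x ∉ N := Finset.mem_compl.mp hx
      rw [Finset.powersetCard_succ_insert hxN, Finset.sum_union, Finset.sum_image]
      · intro J₁ h₁ J₂ h₂ h
        have hx₁ : x ∉ J₁ := fun hc => hxN ((Finset.mem_powersetCard.mp h₁).1 hc)
        have hx₂ : x ∉ J₂ := fun hc => hxN ((Finset.mem_powersetCard.mp h₂).1 hc)
        rw [← Finset.erase_insert hx₁, h, Finset.erase_insert hx₂]
      · rw [Finset.disjoint_left]
        intro I hI hI'
        obtain ⟨J, hJ, rfl⟩ := Finset.mem_image.mp hI'
        exact hxN ((Finset.mem_powersetCard.mp hI).1 (Finset.mem_insert_self x J))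
    rw [Finset.sum_congr rfl step, Finset.sum_add_distrib, Finset.sum_const, hNccard,
      nsmul_eq_mul, Finset.sum_comm]
    have inner : ∀ J ∈ N.powersetCard k', ∑ x ∈ Nᶜ, c (insert x J)
        = - ∑ x ∈ N \ J, c (insert x J) := by
      intro J hJ
      obtain ⟨hJN, hJc⟩ := Finset.mem_powersetCard.mp hJ
      have hJ0 := Hc J (by omega)
      have hsplit : Jᶜ = Nᶜ ∪ (N \ J) := by
        ext x
        simp only [Finset.mem_compl, Finset.mem_union, Finset.mem_sdiff]
        by_cases hxN : x ∈ N
        · constructor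
          · intro h; exact Or.inr ⟨hxN, h⟩
          · rintro (h | ⟨_, h⟩) <;> [exact absurd hxN h; exact h]
        · constructor
          · intro _; exact Or.inl hxN
          · intro _; exact fun hc => hxN (hJN hc)
      have hdisj : Disjoint Nᶜ (N \ J) := by
        rw [Finset.disjoint_left]
        intro x hx hx'
        exact (Finset.mem_compl.mp hx) (Finset.mem_sdiff.mp hx').1
      rw [hsplit, Finset.sum_union hdisj] at hJ0
      exact eq_neg_of_add_eq_zero_left hJ0
    rw [Finset.sum_congr rfl inner, Finset.sum_neg_distrib,
      ← pair_erase N k' (fun J x => c (insert x J))]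
    have h2 : ∑ M ∈ N.powersetCard (k' + 1), ∑ x ∈ M, c (insert x (M.erase x))
        = ((k' : ℂ) + 1) * ∑ I ∈ N.powersetCard (k' + 1), c I := by
      rw [Finset.mul_sum]
      refine Finset.sum_congr rfl fun M hM => ?_
      have hMc := (Finset.mem_powersetCard.mp hM).2
      rw [Finset.sum_congr rfl (fun x hx => by rw [Finset.insert_erase hx]),
        Finset.sum_const, hMc, nsmul_eq_mul]
      push_cast
      ring
    rw [h2]
    have h3 : ((n - (k' + 1 + l - 1) : ℕ) : ℂ) = (n : ℂ) - (k' : ℂ) - (l : ℂ) := by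
      have hle : k' + 1 + l - 1 ≤ n := by omega
      rw [Nat.cast_sub hle]
      have : ((k' + 1 + l - 1 : ℕ) : ℂ) = (k' : ℂ) + (l : ℂ) := by
        have : k' + 1 + l - 1 = k' + l := by omega
        rw [this]; push_cast; ring
      rw [this]; ring
    rw [h3]
    push_cast
    ring

end key

section keyid
variable {n k l : ℕ}

lemma key_identity (c : Finset (Fin n) → ℂ) (hn : k + l ≤ n) (hl : 1 ≤ l)
    (Hc : ∀ J : Finset (Fin n), J.card = k - 1 → ∑ j ∈ Jᶜ, c (insert j J) = 0) :
    (l : ℝ) * ∑ M ∈ Finset.powersetCard (k + l) Finset.univ,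
        Complex.normSq (∑ I ∈ M.powersetCard k, c I)
      = ((n : ℝ) - 2 * k - l + 1) * ∑ N ∈ Finset.powersetCard (k + l - 1) Finset.univ,
          Complex.normSq (∑ I ∈ N.powersetCard k, c I) := by
  classical
  set D : Finset (Fin n) → ℂ := fun M => ∑ I ∈ M.powersetCard k, c I with hD
  have way1 : ∑ M ∈ Finset.powersetCard (k + l) Finset.univ,
      ∑ x ∈ M, (starRingEnd ℂ) (D M) * D (M.erase x)
      = (l : ℂ) * ∑ M ∈ Finset.powersetCard (k + l) Finset.univ, (Complex.normSq (D M) : ℂ) := by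
    rw [Finset.mul_sum]
    refine Finset.sum_congr rfl fun M hM => ?_
    have hMc := Finset.mem_powersetCard_univ.mp hM
    rw [← Finset.mul_sum, claim1 c hMc]
    rw [Complex.normSq_eq_conj_mul_self]
    ring
  have hsucc : k + l = (k + l - 1) + 1 := by omega
  have way2 : ∑ M ∈ Finset.powersetCard (k + l) Finset.univ,
      ∑ x ∈ M, (starRingEnd ℂ) (D M) * D (M.erase x)
      = ((n : ℂ) - 2 * k - l + 1) * ∑ N ∈ Finset.powersetCard (k + l - 1) Finset.univ,
          (Complex.normSq (D N) : ℂ) := by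
    have e1 : ∑ M ∈ Finset.powersetCard (k + l) Finset.univ,
        ∑ x ∈ M, (starRingEnd ℂ) (D M) * D (M.erase x)
        = ∑ M ∈ Finset.powersetCard ((k + l - 1) + 1) Finset.univ,
          ∑ x ∈ M, (starRingEnd ℂ) (D (insert x (M.erase x))) * D (M.erase x) := by
      rw [← hsucc]
      refine Finset.sum_congr rfl fun M _ => Finset.sum_congr rfl fun x hx => ?_
      rw [Finset.insert_erase hx]
    rw [e1, pair_erase Finset.univ (k + l - 1)
      (fun J x => (starRingEnd ℂ) (D (insert x J)) * D J)]
    rw [Finset.mul_sum]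
    refine Finset.sum_congr rfl fun N hN => ?_
    have hNc := Finset.mem_powersetCard_univ.mp hN
    have hsd : Finset.univ \ N = Nᶜ := by rw [Finset.compl_eq_univ_sdiff]
    rw [hsd, ← Finset.sum_mul, ← map_sum]
    have hc2 : ∑ x ∈ Nᶜ, D (insert x N) = ((n : ℂ) - 2 * k - l + 1) * D N := by
      have := claim2 c hn hl Hc (N := N) (by omega)
      simpa [hD] using this
    rw [hc2, map_mul]
    have hconj : (starRingEnd ℂ) ((n : ℂ) - 2 * k - l + 1) = (n : ℂ) - 2 * k - l + 1 := by
      simp [Complex.conj_ofNat]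
    rw [hconj, Complex.normSq_eq_conj_mul_self]
    ring
  have main := way1.symm.trans way2
  have := main
  push_cast at this
  exact_mod_cast this

end keyid

section assembly
variable {n : ℕ}

def E1 (M : Finset (Fin n)) : Fin (n + 1) →₀ ℕ := Finsupp.mapDomain Fin.castSucc (expo M)

def E2 (N : Finset (Fin n)) : Fin (n + 1) →₀ ℕ := Finsupp.single (Fin.last n) 1 + E1 N

lemma E1_inj : Function.Injective (E1 (n := n)) := fun M M' h =>
  expo_inj (Finsupp.mapDomain_injective (Fin.castSucc_injective n) h)

lemma E1_last (M : Finset (Fin n)) : E1 M (Fin.last n) = 0 := by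
  apply Finsupp.mapDomain_notin_range
  rintro ⟨i, hi⟩
  exact absurd hi (Fin.castSucc_lt_last i).ne

lemma E2_last (N : Finset (Fin n)) : E2 N (Fin.last n) = 1 := by
  rw [E2, Finsupp.add_apply, E1_last, Finsupp.single_eq_same]

lemma E1_ne_E2 (M N : Finset (Fin n)) : E1 M ≠ E2 N := fun h => by
  have := congrArg (fun f => f (Fin.last n)) h
  change E1 M (Fin.last n) = E2 N (Fin.last n) at this
  simp only [E1_last, E2_last] at this
  exact absurd this (by omega)

lemma E2_inj : Function.Injective (E2 (n := n)) := fun M M' h =>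
  E1_inj (by rwa [E2, E2, add_right_inj] at h)

lemma combo (A B : Finset (Finset (Fin n))) (u v : Finset (Fin n) → ℂ) :
    sqNorm ((∑ M ∈ A, monomial (E1 M) (u M)) + ∑ N ∈ B, monomial (E2 N) (v N))
      = (∑ M ∈ A, Complex.normSq (u M)) + ∑ N ∈ B, Complex.normSq (v N) := by
  classical
  have h1 : (∑ M ∈ A, monomial (E1 M) (u M)) + ∑ N ∈ B, monomial (E2 N) (v N)
      = ∑ i ∈ A.disjSum B, monomial (Sum.elim E1 E2 i) (Sum.elim u v i) := by
    rw [Finset.sum_disjSum]; rfl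
  have hinj : Set.InjOn (Sum.elim (E1 (n := n)) E2) (A.disjSum B) := by
    rintro (p | p) _ (q | q) _ h
    · rw [E1_inj h]
    · exact absurd h (E1_ne_E2 p q)
    · exact absurd h.symm (E1_ne_E2 q p)
    · rw [E2_inj h]
  rw [h1, sqNorm_sum_monomial _ _ hinj, Finset.sum_disjSum]
  rfl

lemma emb_sum_monomial (A : Finset (Finset (Fin n))) (u : Finset (Fin n) → ℂ) :
    emb n (∑ M ∈ A, monomial (expo M) (u M)) = ∑ M ∈ A, monomial (E1 M) (u M) := by
  rw [emb, map_sum]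
  exact Finset.sum_congr rfl fun M _ => rename_monomial _ _ _

lemma X_mul_sum_monomial (A : Finset (Finset (Fin n))) (u : Finset (Fin n) → ℂ) :
    X (Fin.last n) * ∑ M ∈ A, monomial (E1 M) (u M) = ∑ M ∈ A, monomial (E2 M) (u M) := by
  rw [Finset.mul_sum]
  refine Finset.sum_congr rfl fun M _ => ?_
  rw [X, monomial_mul, one_mul, E2]

end assembly

/-- (Corollary on norms, case `ξ_{n+1} = 0`.)  Let `0 ≤ k < m`, `2m ≤ n`,
`f₀ ∈ A⁰_{n,k}` and `f = ψ_n^{m-k}(f₀) ∈ A_{n,m} ⊆ A_{n+1,m}`.  With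
`g₁ = ((n-m-k+1)/(n-2k+1))·(f + x_{n+1}·ψ_n^{m-k-1}(f₀))` and
`g₂ = (1/(n-2k+1))·((m-k)·f - (n-m-k+1)·x_{n+1}·ψ_n^{m-k-1}(f₀))`,
we have `‖g₁‖² = ((n-m-k+1)/(n-2k+1))·‖f‖²` and `‖g₂‖² = ((m-k)/(n-2k+1))·‖f‖²`. -/
theorem branching_norms_xi_zero (n k m : ℕ) (hk : k < m) (hm : 2 * m ≤ n)
    (f₀ : MvPolynomial (Fin n) ℂ) (hf₀ : f₀ ∈ A0space n k) :
    sqNorm ((((n : ℂ) - m - k + 1) / ((n : ℂ) - 2 * k + 1)) •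
        (emb n (psi n (m - k) f₀) + X (Fin.last n) * emb n (psi n (m - k - 1) f₀)))
      = (((n : ℝ) - m - k + 1) / ((n : ℝ) - 2 * k + 1)) * sqNorm (emb n (psi n (m - k) f₀)) ∧
    sqNorm (((1 : ℂ) / ((n : ℂ) - 2 * k + 1)) •
        (((m : ℂ) - k) • emb n (psi n (m - k) f₀)
          - ((n : ℂ) - m - k + 1) • (X (Fin.last n) * emb n (psi n (m - k - 1) f₀))))
      = (((m : ℝ) - k) / ((n : ℝ) - 2 * k + 1)) * sqNorm (emb n (psi n (m - k) f₀)) := by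
  classical
  obtain ⟨hf1, hf2⟩ := hf₀
  have hkm : k ≤ m := hk.le
  set c : Finset (Fin n) → ℂ := coeffI f₀ with hc
  set D : Finset (Fin n) → ℂ := fun M => ∑ I ∈ M.powersetCard k, c I with hD
  have h1 : psi n (m - k) f₀
      = ∑ M ∈ Finset.powersetCard m Finset.univ, monomial (expo M) (D M) := by
    have := psi_repr (m - k) hf1
    rwa [show k + (m - k) = m by omega] at this
  have h2 : psi n (m - k - 1) f₀
      = ∑ N ∈ Finset.powersetCard (m - 1) Finset.univ, monomial (expo N) (D N) := by
    have := psi_repr (m - k - 1) hf1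
    rwa [show k + (m - k - 1) = m - 1 by omega] at this
  have hP : emb n (psi n (m - k) f₀)
      = ∑ M ∈ Finset.powersetCard m Finset.univ, monomial (E1 M) (D M) := by
    rw [h1, emb_sum_monomial]
  have hQ : X (Fin.last n) * emb n (psi n (m - k - 1) f₀)
      = ∑ N ∈ Finset.powersetCard (m - 1) Finset.univ, monomial (E2 N) (D N) := by
    rw [h2, emb_sum_monomial, X_mul_sum_monomial]
  set Sm := ∑ M ∈ Finset.powersetCard m Finset.univ, Complex.normSq (D M) with hSm
  set Sm1 := ∑ N ∈ Finset.powersetCard (m - 1) Finset.univ, Complex.normSq (D N) with hSm1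
  -- the key identity
  have hkey0 := key_identity c (show k + (m - k) ≤ n by omega) (by omega) hf2
  rw [show k + (m - k) = m by omega] at hkey0
  rw [Nat.cast_sub hkm] at hkey0
  have hkey : ((m : ℝ) - k) * Sm = ((n : ℝ) - m - k + 1) * Sm1 := by
    rw [hSm, hSm1]; linear_combination hkey0
  have hn' : (2 * m : ℝ) ≤ n := by exact_mod_cast hm
  have hk' : (k : ℝ) + 1 ≤ m := by exact_mod_cast hk
  have hA : (0:ℝ) < (n : ℝ) - m - k + 1 := by linarith
  have hB : (0:ℝ) < (n : ℝ) - 2 * k + 1 := by linarith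
  have hSmEq : sqNorm (emb n (psi n (m - k) f₀)) = Sm := by
    rw [hP, sqNorm_sum_monomial _ _ (fun p _ q _ h => E1_inj h)]
  have hL : (0:ℝ) < (m : ℝ) - k := by linarith
  have hSm1eq : Sm1 = (((m : ℝ) - k) * Sm) / ((n : ℝ) - m - k + 1) := by
    field_simp
    linarith [hkey]
  have hlam1 : ((n : ℂ) - m - k + 1) / ((n : ℂ) - 2 * k + 1)
      = (((((n : ℝ) - m - k + 1) / ((n : ℝ) - 2 * k + 1)) : ℝ) : ℂ) := by
    push_cast; ring
  constructor
  · rw [hSmEq, hP, hQ, smul_add, Finset.smul_sum, Finset.smul_sum]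
    simp only [smul_monomial, smul_eq_mul]
    rw [combo]
    simp only [Complex.normSq_mul]
    simp only [← Finset.mul_sum]
    rw [← hSm, ← hSm1, hlam1, Complex.normSq_ofReal, hSm1eq]
    field_simp
    have hB2 : (n : ℝ) - k * 2 + 1 ≠ 0 := by linarith
    rw [div_eq_div_iff (pow_ne_zero 2 hB2) hB2]
    ring
  · rw [hSmEq, hP, hQ, smul_sub, Finset.smul_sum, Finset.smul_sum, Finset.smul_sum,
      Finset.smul_sum]
    simp only [smul_monomial, smul_eq_mul]
    rw [sub_eq_add_neg, ← Finset.sum_neg_distrib]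
    simp only [← map_neg]
    rw [combo]
    simp only [Complex.normSq_neg, Complex.normSq_mul]
    simp only [← Finset.mul_sum]
    rw [← hSm, ← hSm1]
    have hmu1 : ((1:ℂ) / ((n : ℂ) - 2 * k + 1)) = (((1 / ((n : ℝ) - 2 * k + 1)) : ℝ) : ℂ) := by
      push_cast; ring
    have hmu2 : ((m : ℂ) - k) = ((((m:ℝ) - k) : ℝ) : ℂ) := by push_cast; ring
    have hmu3 : ((n : ℂ) - m - k + 1) = (((((n:ℝ) - m - k + 1)) : ℝ) : ℂ) := by push_cast; ring
    rw [hmu1, hmu2, hmu3]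
    simp only [Complex.normSq_ofReal]
    rw [hSm1eq]
    field_simp
    ring

end
end

section
/- Let n, m be integers with 0 ≤ 2m ≤ n and let k, l be integers with 0 ≤ k, l ≤ m and k ≠ l. Then the subspaces H^k_{n,m} and H^l_{n,m} of A_{n,m} are orthogonal with respect to the inner product: ⟨f, g⟩ = 0 for all f ∈ H^k_{n,m} and g ∈ H^l_{n,m}. -/
open MvPolynomial Finset

noncomputable section

namespace HOrth
variable {n : ℕ}

def fromSet (I : Finset (Fin n)) : Fin n →₀ ℕ := ∑ i ∈ I, Finsupp.single i 1

lemma coeffI_def (f : MvPolynomial (Fin n) ℂ) (I : Finset (Fin n)) :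
    coeffI f I = coeff (fromSet I) f := rfl

lemma fromSet_apply (I : Finset (Fin n)) (j : Fin n) :
    fromSet I j = if j ∈ I then 1 else 0 := by
  classical
  rw [fromSet, Finset.sum_apply']
  simp [Finsupp.single_apply]

lemma fromSet_injective : Function.Injective (fromSet (n := n)) := by
  intro I J h
  ext j
  have h1 := fromSet_apply I j
  rw [h, fromSet_apply] at h1
  by_cases hI : j ∈ I <;> by_cases hJ : j ∈ J <;> simp [hI, hJ] at h1 ⊢

lemma xI_eq (I : Finset (Fin n)) : xI n I = monomial (fromSet I) 1 := by
  classical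
  induction I using Finset.induction_on with
  | empty => simp [xI, fromSet]
  | insert a s h ih =>
    have hfs : fromSet (insert a s) = Finsupp.single a 1 + fromSet s := by
      rw [fromSet, fromSet, Finset.sum_insert h]
    rw [xI, Finset.prod_insert h, ← xI, ih, hfs, X, monomial_mul, one_mul]

lemma coeffI_xI (I J : Finset (Fin n)) :
    coeffI (xI n J) I = if I = J then 1 else 0 := by
  rw [coeffI_def, xI_eq, coeff_monomial]
  by_cases h : I = J
  · simp [h]
  · rw [if_neg h, if_neg (fun hh => h (fromSet_injective hh.symm))]

lemma psi_xI (l : ℕ) (J : Finset (Fin n)) :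
    psi n l (xI n J) =
      ∑ S ∈ Finset.univ.filter (fun S : Finset (Fin n) => S.card = l),
        (if Disjoint J S then xI n (J ∪ S) else 0) := by
  classical
  rw [psi, LinearMap.sum_apply]
  refine Finset.sum_congr rfl fun S hS => ?_
  rw [LinearMap.comp_apply]
  simp only [AlgHom.toLinearMap_apply, LinearMap.mulRight_apply]
  by_cases h : Disjoint J S
  · rw [if_pos h]
    have h1 : (aeval fun i : Fin n => if i ∈ S then 0 else X i) (xI n J) = xI n J := by
      rw [xI, map_prod]
      refine Finset.prod_congr rfl fun i hi => ?_
      rw [aeval_X, if_neg (Finset.disjoint_left.mp h hi)]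
    rw [h1, xI, xI, xI, ← Finset.prod_union h]
  · rw [if_neg h]
    obtain ⟨i, hiJ, hiS⟩ := Finset.not_disjoint_iff.mp h
    rw [xI, map_prod, Finset.prod_eq_zero hiJ, zero_mul]
    rw [aeval_X, if_pos hiS]

lemma coeffI_psi_xI (k l : ℕ) (J M : Finset (Fin n)) (hJ : J.card = k) (hM : M.card = k + l) :
    coeffI (psi n l (xI n J)) M = if J ⊆ M then 1 else 0 := by
  classical
  rw [psi_xI, coeffI_def, coeff_sum]
  have hterm : ∀ S ∈ Finset.univ.filter (fun S : Finset (Fin n) => S.card = l),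
      coeff (fromSet M) (if Disjoint J S then xI n (J ∪ S) else 0)
        = if Disjoint J S ∧ J ∪ S = M then 1 else 0 := by
    intro S hS
    by_cases h : Disjoint J S
    · rw [if_pos h, ← coeffI_def, coeffI_xI]
      by_cases h2 : M = J ∪ S
      · simp [h, h2]
      · rw [if_neg h2, if_neg (fun hh => h2 hh.2.symm)]
    · simp [h]
  rw [Finset.sum_congr rfl hterm]
  by_cases hsub : J ⊆ M
  · rw [if_pos hsub]
    rw [Finset.sum_eq_single_of_mem (M \ J)]
    · rw [if_pos ⟨Finset.disjoint_sdiff, Finset.union_sdiff_of_subset hsub⟩]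
    · simp only [Finset.mem_filter, Finset.mem_univ, true_and]
      rw [Finset.card_sdiff_of_subset hsub, hM, hJ]; omega
    · intro S hS hne
      rw [if_neg]
      rintro ⟨hd, hu⟩
      exact hne (by rw [← hu, Finset.union_sdiff_cancel_left hd])
  · rw [if_neg hsub, Finset.sum_eq_zero]
    intro S hS
    rw [if_neg]
    rintro ⟨hd, hu⟩
    exact hsub (hu ▸ Finset.subset_union_left)

lemma coeffI_psi (k l : ℕ) (f : MvPolynomial (Fin n) ℂ) (hf : f ∈ Aspace n k)
    (M : Finset (Fin n)) (hM : M.card = k + l) :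
    coeffI (psi n l f) M = ∑ I ∈ M.powersetCard k, coeffI f I := by
  classical
  induction hf using Submodule.span_induction with
  | mem x hx =>
    obtain ⟨J, hJ, rfl⟩ := hx
    rw [coeffI_psi_xI k l J M hJ hM]
    have h1 : ∀ I ∈ M.powersetCard k, coeffI (xI n J) I = if I = J then (1:ℂ) else 0 :=
      fun I _ => coeffI_xI I J
    rw [Finset.sum_congr rfl h1, Finset.sum_ite_eq' (M.powersetCard k) J (fun _ => (1:ℂ))]
    by_cases h : J ⊆ M
    · rw [if_pos h, if_pos (Finset.mem_powersetCard.mpr ⟨h, hJ⟩)]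
    · rw [if_neg h, if_neg (fun hh => h (Finset.mem_powersetCard.mp hh).1)]
  | zero => simp [coeffI_def]
  | add x y hx hy ihx ihy =>
    rw [map_add]
    simp only [coeffI_def, coeff_add] at ihx ihy ⊢
    rw [Finset.sum_add_distrib, ← ihx, ← ihy]
  | smul a x hx ih =>
    rw [map_smul]
    simp only [coeffI_def, coeff_smul, smul_eq_mul] at ih ⊢
    rw [ih, Finset.mul_sum]

lemma coeff_psi_zero (k l : ℕ) (f : MvPolynomial (Fin n) ℂ) (hf : f ∈ Aspace n k)
    (d : Fin n →₀ ℕ) (hd : ∀ M : Finset (Fin n), M.card = k + l → d ≠ fromSet M) :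
    coeff d (psi n l f) = 0 := by
  classical
  induction hf using Submodule.span_induction with
  | mem x hx =>
    obtain ⟨J, hJ, rfl⟩ := hx
    rw [psi_xI, coeff_sum, Finset.sum_eq_zero]
    intro S hS
    by_cases h : Disjoint J S
    · rw [if_pos h, xI_eq, coeff_monomial, if_neg]
      intro hh
      refine hd (J ∪ S) ?_ hh.symm
      rw [Finset.card_union_of_disjoint h, hJ, (Finset.mem_filter.mp hS).2]
    · simp [h]
  | zero => simp
  | add x y hx hy ihx ihy => rw [map_add, coeff_add, ihx, ihy, add_zero]
  | smul a x hx ih => rw [map_smul, coeff_smul, ih, smul_zero]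

lemma pInner_eq (m : ℕ) (f g : MvPolynomial (Fin n) ℂ)
    (hf : ∀ d : Fin n →₀ ℕ, coeff d f ≠ 0 → ∃ M : Finset (Fin n), M.card = m ∧ d = fromSet M) :
    pInner f g = ∑ M ∈ Finset.univ.powersetCard m,
      coeffI f M * (starRingEnd ℂ) (coeffI g M) := by
  classical
  have hsub : f.support ⊆ (Finset.univ.powersetCard m).image fromSet := by
    intro d hd
    obtain ⟨M, hM1, hM2⟩ := hf d (MvPolynomial.mem_support_iff.mp hd)
    exact Finset.mem_image.mpr ⟨M, Finset.mem_powersetCard_univ.mpr hM1, hM2.symm⟩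
  rw [pInner, Finset.sum_subset hsub]
  · rw [Finset.sum_image (fun a _ b _ h => fromSet_injective h)]
    exact Finset.sum_congr rfl fun M _ => by rw [coeffI_def, coeffI_def]
  · intro d _ hd
    rw [MvPolynomial.notMem_support_iff.mp hd, zero_mul]

lemma adj (u v : Finset (Fin n) → ℂ) (r : ℕ) :
    ∑ M ∈ Finset.univ.powersetCard (r+1), (∑ j ∈ M, u (M.erase j)) * v M
      = ∑ N ∈ Finset.univ.powersetCard r, u N * ∑ j ∈ Nᶜ, v (insert j N) := by
  classical
  simp_rw [Finset.sum_mul, Finset.mul_sum]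
  rw [Finset.sum_sigma' (Finset.univ.powersetCard (r+1)) (fun M => M)
        (fun M j => u (M.erase j) * v M),
      Finset.sum_sigma' (Finset.univ.powersetCard r) (fun N => Nᶜ)
        (fun N j => u N * v (insert j N))]
  refine Finset.sum_nbij' (fun p => ⟨p.1.erase p.2, p.2⟩) (fun p => ⟨insert p.2 p.1, p.2⟩)
    ?_ ?_ ?_ ?_ ?_
  · rintro ⟨M, j⟩ hp
    rw [Finset.mem_sigma] at hp
    obtain ⟨hM, hj⟩ := hp
    rw [Finset.mem_sigma]
    constructor
    · rw [Finset.mem_powersetCard_univ, Finset.card_erase_of_mem hj,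
        Finset.mem_powersetCard_univ.mp hM]
      omega
    · simp
  · rintro ⟨N, j⟩ hp
    rw [Finset.mem_sigma] at hp
    obtain ⟨hN, hj⟩ := hp
    rw [Finset.mem_compl] at hj
    rw [Finset.mem_sigma]
    constructor
    · rw [Finset.mem_powersetCard_univ, Finset.card_insert_of_notMem hj,
        Finset.mem_powersetCard_univ.mp hN]
    · exact Finset.mem_insert_self _ _
  · rintro ⟨M, j⟩ hp
    rw [Finset.mem_sigma] at hp
    simp only [Sigma.mk.inj_iff]
    exact ⟨Finset.insert_erase hp.2, HEq.rfl⟩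
  · rintro ⟨N, j⟩ hp
    rw [Finset.mem_sigma] at hp
    have hj := Finset.mem_compl.mp hp.2
    simp only [Sigma.mk.inj_iff]
    exact ⟨Finset.erase_insert hj, HEq.rfl⟩
  · rintro ⟨M, j⟩ hp
    rw [Finset.mem_sigma] at hp
    simp only
    rw [Finset.insert_erase hp.2]

lemma psiC (c : Finset (Fin n) → ℂ) (k : ℕ) (M : Finset (Fin n)) :
    ∑ j ∈ M, (∑ I ∈ (M.erase j).powersetCard k, c I)
      = ((M.card - k : ℕ) : ℂ) * ∑ I ∈ M.powersetCard k, c I := by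
  classical
  rw [Finset.sum_sigma' M (fun j => (M.erase j).powersetCard k) (fun _ I => c I),
      Finset.mul_sum]
  have h1 : ∀ I ∈ M.powersetCard k, ((M.card - k : ℕ) : ℂ) * c I = ∑ j ∈ M \ I, c I := by
    intro I hI
    obtain ⟨hIM, hIc⟩ := Finset.mem_powersetCard.mp hI
    rw [Finset.sum_const, Finset.card_sdiff_of_subset hIM, hIc, nsmul_eq_mul]
  rw [Finset.sum_congr rfl h1,
      Finset.sum_sigma' (M.powersetCard k) (fun I => M \ I) (fun I _ => c I)]
  refine Finset.sum_nbij' (fun p => ⟨p.2, p.1⟩) (fun p => ⟨p.2, p.1⟩) ?_ ?_ ?_ ?_ ?_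
  · rintro ⟨j, I⟩ hp
    rw [Finset.mem_sigma] at hp
    obtain ⟨hj, hI⟩ := hp
    obtain ⟨hIM, hIc⟩ := Finset.mem_powersetCard.mp hI
    rw [Finset.subset_erase] at hIM
    rw [Finset.mem_sigma]
    exact ⟨Finset.mem_powersetCard.mpr ⟨hIM.1, hIc⟩, Finset.mem_sdiff.mpr ⟨hj, hIM.2⟩⟩
  · rintro ⟨I, j⟩ hp
    rw [Finset.mem_sigma] at hp
    obtain ⟨hI, hj⟩ := hp
    obtain ⟨hIM, hIc⟩ := Finset.mem_powersetCard.mp hI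
    obtain ⟨hjM, hjI⟩ := Finset.mem_sdiff.mp hj
    rw [Finset.mem_sigma]
    exact ⟨hjM, Finset.mem_powersetCard.mpr ⟨Finset.subset_erase.mpr ⟨hIM, hjI⟩, hIc⟩⟩
  · rintro ⟨j, I⟩ _; rfl
  · rintro ⟨I, j⟩ _; rfl
  · rintro ⟨j, I⟩ _; rfl

lemma push (d : Finset (Fin n) → ℂ) (l' : ℕ) (N : Finset (Fin n)) :
    ∑ J' ∈ N.powersetCard l', ∑ j ∈ N \ J', d (insert j J')
      = ((l' + 1 : ℕ) : ℂ) * ∑ J ∈ N.powersetCard (l' + 1), d J := by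
  classical
  rw [Finset.sum_sigma' (N.powersetCard l') (fun J' => N \ J') (fun J' j => d (insert j J')),
      Finset.mul_sum]
  have h1 : ∀ J ∈ N.powersetCard (l'+1), ((l' + 1 : ℕ) : ℂ) * d J = ∑ j ∈ J, d J := by
    intro J hJ
    rw [Finset.sum_const, (Finset.mem_powersetCard.mp hJ).2, nsmul_eq_mul]
  rw [Finset.sum_congr rfl h1,
      Finset.sum_sigma' (N.powersetCard (l'+1)) (fun J => J) (fun J _ => d J)]
  refine Finset.sum_nbij' (fun p => ⟨insert p.2 p.1, p.2⟩) (fun p => ⟨p.1.erase p.2, p.2⟩)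
    ?_ ?_ ?_ ?_ ?_
  · rintro ⟨J', j⟩ hp
    rw [Finset.mem_sigma] at hp
    obtain ⟨hJ', hj⟩ := hp
    obtain ⟨hJ'N, hJ'c⟩ := Finset.mem_powersetCard.mp hJ'
    obtain ⟨hjN, hjJ'⟩ := Finset.mem_sdiff.mp hj
    rw [Finset.mem_sigma]
    constructor
    · refine Finset.mem_powersetCard.mpr ⟨Finset.insert_subset hjN hJ'N, ?_⟩
      rw [Finset.card_insert_of_notMem hjJ', hJ'c]
    · exact Finset.mem_insert_self _ _
  · rintro ⟨J, j⟩ hp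
    rw [Finset.mem_sigma] at hp
    obtain ⟨hJ, hj⟩ := hp
    obtain ⟨hJN, hJc⟩ := Finset.mem_powersetCard.mp hJ
    rw [Finset.mem_sigma]
    constructor
    · refine Finset.mem_powersetCard.mpr ⟨(Finset.erase_subset _ _).trans hJN, ?_⟩
      rw [Finset.card_erase_of_mem hj, hJc]
      omega
    · exact Finset.mem_sdiff.mpr ⟨hJN hj, Finset.notMem_erase _ _⟩
  · rintro ⟨J', j⟩ hp
    rw [Finset.mem_sigma] at hp
    have hjJ' := (Finset.mem_sdiff.mp hp.2).2
    simp only [Sigma.mk.inj_iff]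
    exact ⟨Finset.erase_insert hjJ', HEq.rfl⟩
  · rintro ⟨J, j⟩ hp
    rw [Finset.mem_sigma] at hp
    simp only [Sigma.mk.inj_iff]
    exact ⟨Finset.insert_erase hp.2, HEq.rfl⟩
  · rintro ⟨J', j⟩ _
    rfl

lemma deltaD (d : Finset (Fin n) → ℂ) (l : ℕ) (hl : 1 ≤ l)
    (hd : ∀ J : Finset (Fin n), J.card = l - 1 → ∑ j ∈ Jᶜ, d (insert j J) = 0)
    (N : Finset (Fin n)) :
    ∑ j ∈ Nᶜ, (∑ J ∈ (insert j N).powersetCard l, d J)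
      = ((Nᶜ.card : ℂ) - l) * ∑ J ∈ N.powersetCard l, d J := by
  classical
  obtain ⟨l', rfl⟩ : ∃ l', l = l' + 1 := ⟨l - 1, by omega⟩
  have hstep : ∀ j ∈ Nᶜ,
      (∑ J ∈ (insert j N).powersetCard (l'+1), d J)
        = (∑ J ∈ N.powersetCard (l'+1), d J)
          + ∑ J' ∈ N.powersetCard l', d (insert j J') := by
    intro j hj
    have hjN : j ∉ N := Finset.mem_compl.mp hj
    rw [Finset.powersetCard_succ_insert hjN, Finset.sum_union, Finset.sum_image]
    · intro A hA B hB hAB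
      have hA' : j ∉ A := fun h => hjN ((Finset.mem_powersetCard.mp hA).1 h)
      have hB' : j ∉ B := fun h => hjN ((Finset.mem_powersetCard.mp hB).1 h)
      rw [← Finset.erase_insert hA', hAB, Finset.erase_insert hB']
    · rw [Finset.disjoint_left]
      intro A hA hA2
      obtain ⟨B, hB, rfl⟩ := Finset.mem_image.mp hA2
      exact hjN ((Finset.mem_powersetCard.mp hA).1 (Finset.mem_insert_self j B))
  rw [Finset.sum_congr rfl hstep, Finset.sum_add_distrib, Finset.sum_const,
    Finset.sum_comm]
  have hinner : ∀ J' ∈ N.powersetCard l', ∑ j ∈ Nᶜ, d (insert j J')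
      = - ∑ j ∈ N \ J', d (insert j J') := by
    intro J' hJ'
    obtain ⟨hJ'N, hJ'c⟩ := Finset.mem_powersetCard.mp hJ'
    have hcomp : J'ᶜ = Nᶜ ∪ (N \ J') := by
      ext x
      simp only [Finset.mem_compl, Finset.mem_union, Finset.mem_sdiff]
      constructor
      · intro hx
        by_cases hxN : x ∈ N
        · exact Or.inr ⟨hxN, hx⟩
        · exact Or.inl hxN
      · rintro (hx | ⟨_, hx⟩)
        · exact fun h => hx (hJ'N h)
        · exact hx
    have hdisj : Disjoint Nᶜ (N \ J') := by
      rw [Finset.disjoint_left]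
      intro x hx hx2
      exact (Finset.mem_compl.mp hx) (Finset.mem_sdiff.mp hx2).1
    have h0 := hd J' (by simpa using hJ'c)
    rw [hcomp, Finset.sum_union hdisj] at h0
    exact eq_neg_of_add_eq_zero_left h0
  rw [Finset.sum_congr rfl hinner, Finset.sum_neg_distrib, push d l' N,
    nsmul_eq_mul]
  push_cast
  ring

lemma Pzero (c d : Finset (Fin n) → ℂ) (k l : ℕ) (hkl : k < l)
    (hd : ∀ J : Finset (Fin n), J.card = l - 1 → ∑ j ∈ Jᶜ, d (insert j J) = 0)
    (m : ℕ) (hm : l ≤ m) :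
    ∑ M ∈ Finset.univ.powersetCard m,
      (∑ I ∈ M.powersetCard k, c I) * (starRingEnd ℂ) (∑ J ∈ M.powersetCard l, d J) = 0 := by
  classical
  set C : Finset (Fin n) → ℂ := fun M => ∑ I ∈ M.powersetCard k, c I with hC
  set D : Finset (Fin n) → ℂ := fun M => ∑ J ∈ M.powersetCard l, d J with hD
  set P : ℕ → ℂ := fun r => ∑ M ∈ Finset.univ.powersetCard r, C M * (starRingEnd ℂ) (D M)
    with hP
  -- step 1 : pull out the factor (r+1-k)
  have hstep1 : ∀ r : ℕ,
      ((r + 1 - k : ℕ) : ℂ) * P (r + 1)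
        = ∑ N ∈ Finset.univ.powersetCard r,
            C N * ∑ j ∈ Nᶜ, (starRingEnd ℂ) (D (insert j N)) := by
    intro r
    rw [hP, Finset.mul_sum]
    rw [← adj C (fun M => (starRingEnd ℂ) (D M)) r]
    refine Finset.sum_congr rfl fun M hM => ?_
    have hMc : M.card = r + 1 := Finset.mem_powersetCard_univ.mp hM
    have := psiC c k M
    rw [hMc] at this
    rw [hC]
    simp only
    rw [this]
    ring
  -- base : P l = 0
  have hbase : P l = 0 := by
    obtain ⟨r0, hr0⟩ : ∃ r0, l = r0 + 1 := ⟨l - 1, by omega⟩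
    have h1 := hstep1 r0
    rw [← hr0] at h1
    have h2 : ∀ N ∈ Finset.univ.powersetCard r0,
        C N * ∑ j ∈ Nᶜ, (starRingEnd ℂ) (D (insert j N)) = 0 := by
      intro N hN
      have hNc : N.card = r0 := Finset.mem_powersetCard_univ.mp hN
      have h3 : ∀ j ∈ Nᶜ, (starRingEnd ℂ) (D (insert j N)) = (starRingEnd ℂ) (d (insert j N)) := by
        intro j hj
        have hjN : j ∉ N := Finset.mem_compl.mp hj
        have hcard : (insert j N).card = l := by
          rw [Finset.card_insert_of_notMem hjN, hNc, hr0]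
        rw [hD]
        simp only
        rw [← hcard, Finset.powersetCard_self, Finset.sum_singleton]
      rw [Finset.sum_congr rfl h3, ← map_sum, hd N (by omega), map_zero, mul_zero]
    rw [Finset.sum_congr rfl h2, Finset.sum_const, smul_zero] at h1
    have hlk : ((l - k : ℕ) : ℂ) ≠ 0 := by
      rw [Nat.cast_ne_zero]
      omega
    exact (mul_eq_zero.mp h1).resolve_left hlk
  -- step : recursion
  have hstep : ∀ r : ℕ, k ≤ r → P r = 0 → P (r + 1) = 0 := by
    intro r hrk hPr
    · have h1 := hstep1 r
      have h2 : ∀ N ∈ Finset.univ.powersetCard r,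
          C N * ∑ j ∈ Nᶜ, (starRingEnd ℂ) (D (insert j N))
            = (((n - r : ℕ) : ℂ) - l) * (C N * (starRingEnd ℂ) (D N)) := by
        intro N hN
        have hNc : N.card = r := Finset.mem_powersetCard_univ.mp hN
        have h3 := deltaD d l (by omega) hd N
        have hNcc : Nᶜ.card = n - r := by
          rw [Finset.card_compl, hNc, Fintype.card_fin]
        rw [← map_sum, h3, hNcc, map_mul, map_sub]
        rw [map_natCast, Complex.conj_natCast]
        ring
      have hPr' : ∑ i ∈ Finset.univ.powersetCard r, C i * (starRingEnd ℂ) (D i) = 0 := hPr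
      rw [Finset.sum_congr rfl h2, ← Finset.mul_sum, hPr', mul_zero] at h1
      have hne : ((r + 1 - k : ℕ) : ℂ) ≠ 0 := by
        rw [Nat.cast_ne_zero]
        omega
      exact (mul_eq_zero.mp h1).resolve_left hne
  have hall : ∀ s : ℕ, P (l + s) = 0 := by
    intro s
    induction s with
    | zero => simpa using hbase
    | succ s ih => simpa [← Nat.add_assoc] using hstep (l + s) (by omega) ih
  have hfin := hall (m - l)
  rw [Nat.add_sub_cancel' hm] at hfin
  exact hfin
lemma key (n m k l : ℕ) (hk : k ≤ m) (hl : l ≤ m) (hkl : k < l)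
    (f : MvPolynomial (Fin n) ℂ) (hf : f ∈ Hspace n m k)
    (g : MvPolynomial (Fin n) ℂ) (hg : g ∈ Hspace n m l) : pInner f g = 0 := by
  classical
  obtain ⟨f0, hf0, rfl⟩ := Submodule.mem_map.mp hf
  obtain ⟨g0, hg0, rfl⟩ := Submodule.mem_map.mp hg
  obtain ⟨hfA, hfH⟩ := hf0
  obtain ⟨hgA, hgH⟩ := hg0
  have hkm : k + (m - k) = m := by omega
  have hlm : l + (m - l) = m := by omega
  have hsupp : ∀ d : Fin n →₀ ℕ, coeff d (psi n (m - k) f0) ≠ 0 →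
      ∃ M : Finset (Fin n), M.card = m ∧ d = fromSet M := by
    intro d hd
    by_contra hcon
    push_neg at hcon
    exact hd (coeff_psi_zero k (m - k) f0 hfA d
      (fun M hM => hcon M (by omega)))
  rw [pInner_eq m _ _ hsupp]
  have hrw : ∀ M ∈ Finset.univ.powersetCard m,
      coeffI (psi n (m - k) f0) M * (starRingEnd ℂ) (coeffI (psi n (m - l) g0) M)
        = (∑ I ∈ M.powersetCard k, coeffI f0 I)
            * (starRingEnd ℂ) (∑ J ∈ M.powersetCard l, coeffI g0 J) := by
    intro M hM
    have hMc := Finset.mem_powersetCard_univ.mp hM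
    rw [coeffI_psi k (m - k) f0 hfA M (by omega),
      coeffI_psi l (m - l) g0 hgA M (by omega)]
  rw [Finset.sum_congr rfl hrw]
  exact Pzero (fun I => coeffI f0 I) (fun J => coeffI g0 J) k l hkl hgH m hl

end HOrth

/-- For `0 ≤ 2m ≤ n` and `k ≠ l` with `k, l ≤ m`, the subspaces `H^k_{n,m}` and
`H^l_{n,m}` of `A_{n,m}` are orthogonal. -/
theorem Hspace_orthogonal (n m k l : ℕ) (hm : 2 * m ≤ n)
    (hk : k ≤ m) (hl : l ≤ m) (hkl : k ≠ l) :
    ∀ f ∈ Hspace n m k, ∀ g ∈ Hspace n m l, pInner f g = 0 := by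
  classical
  intro f hf g hg
  rcases hkl.lt_or_gt with h | h
  · exact HOrth.key n m k l hk hl h f hf g hg
  · have h0 := HOrth.key n m l k hl hk h g hg f hf
    obtain ⟨f0, hf0, hfeq⟩ := Submodule.mem_map.mp hf
    obtain ⟨g0, hg0, hgeq⟩ := Submodule.mem_map.mp hg
    have hsf : ∀ d : Fin n →₀ ℕ, MvPolynomial.coeff d f ≠ 0 →
        ∃ M : Finset (Fin n), M.card = m ∧ d = HOrth.fromSet M := by
      intro d hd
      by_contra hcon
      push_neg at hcon
      refine hd ?_
      rw [← hfeq]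
      exact HOrth.coeff_psi_zero k (m - k) f0 hf0.1 d (fun M hM => hcon M (by omega))
    have hsg : ∀ d : Fin n →₀ ℕ, MvPolynomial.coeff d g ≠ 0 →
        ∃ M : Finset (Fin n), M.card = m ∧ d = HOrth.fromSet M := by
      intro d hd
      by_contra hcon
      push_neg at hcon
      refine hd ?_
      rw [← hgeq]
      exact HOrth.coeff_psi_zero l (m - l) g0 hg0.1 d (fun M hM => hcon M (by omega))
    rw [HOrth.pInner_eq m f g hsf]
    rw [HOrth.pInner_eq m g f hsg] at h0
    have h1 := congrArg (starRingEnd ℂ) h0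
    rw [map_sum, map_zero] at h1
    rw [← h1]
    refine Finset.sum_congr rfl fun M _ => ?_
    rw [map_mul, Complex.conj_conj]
    ring

end
end
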